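/- arXiv:2309.07086 — 6 statements merged into one kernel-verified Lean document; each statement's English description precedes it below -/
import Mathlib

section
/- Let f : ℝⁿ → ℝ be continuously differentiable with L-Lipschitz gradient, fix u ∈ ℝⁿ with g := ∇f(u) ≠ 0, let H be symmetric positive semidefinite with ‖H‖ ≤ M_H, γ > 0, η ∈ (0,1), m_γ(s) = f(u) + gᵀs + (1/2)sᵀ(H + γI)s, and s* = −(H + γI)⁻¹ g. If the iteration is unsuccessful, i.e. f(u + s*) − f(u) > η(m_γ(s*) − m_γ(0)), then (2 − η)γ² − (L − M_H)γ − L·M_H < 0, and consequently γ < γ̄ := (L − M_H + √((L − M_H)² + 4(2 − η) L M_H)) / (2(2 − η)). -/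
open Matrix
open scoped Matrix.Norms.L2Operator RealInnerProductSpace Gradient

/-! The exact regularized step `s = -(H + γI)⁻¹ g` satisfies `γ‖s‖² ≤ -⟪g, s⟫` and has model
decrease `½⟪g, s⟫`. The descent lemma `f (u + s) ≤ f u + ⟪g, s⟫ + (L/2)‖s‖²` therefore turns an
unsuccessful step into `(2 - η)γ‖s‖² < L‖s‖²`, i.e. `(2 - η)γ < L`. The quadratic then splits as
`γ((2 - η)γ - L) + M_H(γ - L) < 0`, and a negative value of an upward parabola lies below its
larger root. -/

section Descent

variable {E : Type*} [NormedAddCommGroup E] [InnerProductSpace ℝ E] [CompleteSpace E]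
  {f : E → ℝ} {L : ℝ}

theorem apply_add_le_of_lipschitz_gradient (hf : Differentiable ℝ f)
    (hLip : ∀ x y, ‖∇ f x - ∇ f y‖ ≤ L * ‖x - y‖) (u s : E) :
    f (u + s) ≤ f u + ⟪∇ f u, s⟫ + L / 2 * ‖s‖ ^ 2 := by
  set φ : ℝ → ℝ := fun t ↦ f (u + t • s) - t * ⟪∇ f u, s⟫ - L / 2 * t ^ 2 * ‖s‖ ^ 2
  have hφ' : ∀ t : ℝ, HasDerivAt φ (⟪∇ f (u + t • s), s⟫ - ⟪∇ f u, s⟫ - L * t * ‖s‖ ^ 2) t := by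
    intro t
    have hpath : HasDerivAt (fun t : ℝ ↦ u + t • s) s t := by
      simpa using ((hasDerivAt_id t).smul_const s).const_add u
    have hf_path : HasDerivAt (fun t : ℝ ↦ f (u + t • s)) ⟪∇ f (u + t • s), s⟫ t :=
      (hasGradientAt_iff_hasFDerivAt.mp (hf _).hasGradientAt).comp_hasDerivAt t hpath
    have hlin := (hasDerivAt_id' t).mul_const ⟪∇ f u, s⟫
    have hquad := ((hasDerivAt_pow 2 t).const_mul (L / 2)).mul_const (‖s‖ ^ 2)
    exact ((hf_path.sub hlin).sub hquad).congr_deriv (by push_cast; ring)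
  have hφ'_nonpos : ∀ t, 0 ≤ t → ⟪∇ f (u + t • s), s⟫ - ⟪∇ f u, s⟫ - L * t * ‖s‖ ^ 2 ≤ 0 := by
    intro t ht
    calc ⟪∇ f (u + t • s), s⟫ - ⟪∇ f u, s⟫ - L * t * ‖s‖ ^ 2
        = ⟪∇ f (u + t • s) - ∇ f u, s⟫ - L * t * ‖s‖ ^ 2 := by rw [inner_sub_left]
      _ ≤ ‖∇ f (u + t • s) - ∇ f u‖ * ‖s‖ - L * t * ‖s‖ ^ 2 := by
          gcongr; exact real_inner_le_norm _ _
      _ ≤ L * ‖(u + t • s) - u‖ * ‖s‖ - L * t * ‖s‖ ^ 2 := by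
          gcongr; exact hLip _ _
      _ = 0 := by
          rw [add_sub_cancel_left, norm_smul, Real.norm_of_nonneg ht]; ring
  have hanti : AntitoneOn φ (Set.Icc 0 1) :=
    antitoneOn_of_hasDerivWithinAt_nonpos (convex_Icc 0 1)
      (fun t _ ↦ (hφ' t).continuousAt.continuousWithinAt)
      (fun t _ ↦ (hφ' t).hasDerivWithinAt)
      (fun t ht ↦ hφ'_nonpos t (interior_subset ht).1)
  have := hanti (Set.left_mem_Icc.mpr zero_le_one) (Set.right_mem_Icc.mpr zero_le_one) zero_le_one
  simp only [φ, zero_smul, one_smul, add_zero] at this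
  linarith

theorem two_sub_mul_lt_of_unsuccessful_step (hf : Differentiable ℝ f)
    (hLip : ∀ x y, ‖∇ f x - ∇ f y‖ ≤ L * ‖x - y‖) {u s : E} {γ η : ℝ} (hη : η ≤ 2)
    (hcurv : γ * ‖s‖ ^ 2 ≤ -⟪∇ f u, s⟫) (hunsucc : f (u + s) - f u > η * (1 / 2 * ⟪∇ f u, s⟫)) :
    (2 - η) * γ < L := by
  have hdesc := apply_add_le_of_lipschitz_gradient hf hLip u s
  have hcurv' : (2 - η) * γ * ‖s‖ ^ 2 ≤ (2 - η) * -⟪∇ f u, s⟫ := by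
    rw [mul_assoc]; exact mul_le_mul_of_nonneg_left hcurv (by linarith)
  have hneg : ((2 - η) * γ - L) * ‖s‖ ^ 2 < 0 := by linarith
  exact sub_neg.mp (neg_of_mul_neg_left hneg (sq_nonneg _))

end Descent

theorem lt_quadratic_root_of_neg {a b c x : ℝ} (ha : 0 < a) (h : a * x ^ 2 - b * x - c < 0) :
    x < (b + Real.sqrt (b ^ 2 + 4 * a * c)) / (2 * a) := by
  have hsq : (2 * a * x - b) ^ 2 < b ^ 2 + 4 * a * c := by nlinarith [mul_neg_of_pos_of_neg ha h]
  have hroot : 2 * a * x - b < Real.sqrt (b ^ 2 + 4 * a * c) :=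
    calc 2 * a * x - b ≤ |2 * a * x - b| := le_abs_self _
      _ = Real.sqrt ((2 * a * x - b) ^ 2) := (Real.sqrt_sq_eq_abs _).symm
      _ < Real.sqrt (b ^ 2 + 4 * a * c) := Real.sqrt_lt_sqrt (sq_nonneg _) hsq
  rw [lt_div_iff₀ (by positivity)]
  linarith

theorem quadratic_neg_of_two_sub_mul_lt {η γ L M : ℝ} (hη : η ≤ 1) (hγ : 0 < γ) (hM : 0 ≤ M)
    (h : (2 - η) * γ < L) : (2 - η) * γ ^ 2 - (L - M) * γ - L * M < 0 := by
  have hγL : γ < L := by nlinarith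
  have : (2 - η) * γ ^ 2 - (L - M) * γ - L * M = γ * ((2 - η) * γ - L) + M * (γ - L) := by ring
  rw [this]
  have h₁ : γ * ((2 - η) * γ - L) < 0 := mul_neg_of_pos_of_neg hγ (sub_neg.mpr h)
  have h₂ : M * (γ - L) ≤ 0 := mul_nonpos_of_nonneg_of_nonpos hM (sub_nonpos.mpr hγL.le)
  linarith

section Matrix

variable {n : Type*} [Fintype n] [DecidableEq n]

theorem Matrix.toEuclideanLin_apply_toEuclideanLin_inv {𝕜 : Type*} [RCLike 𝕜] {A : Matrix n n 𝕜}
    (hA : IsUnit A) (x : EuclideanSpace 𝕜 n) : toEuclideanLin A (toEuclideanLin A⁻¹ x) = x := by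
  rw [← LinearMap.comp_apply, ← toLpLin_mul_same,
    mul_nonsing_inv A ((isUnit_iff_isUnit_det A).mp hA), toLpLin_one, LinearMap.id_apply]

theorem Matrix.PosSemidef.mul_norm_sq_le_inner_add_smul_one {H : Matrix n n ℝ} (hH : H.PosSemidef)
    (γ : ℝ) (x : EuclideanSpace ℝ n) :
    γ * ‖x‖ ^ 2 ≤ ⟪x, toEuclideanLin (H + γ • (1 : Matrix n n ℝ)) x⟫ := by
  have hHx : 0 ≤ ⟪x, toEuclideanLin H x⟫ :=
    (isPositive_toEuclideanLin_iff.mpr hH).inner_nonneg_right x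
  rw [map_add, map_smul, toLpLin_one, LinearMap.add_apply, LinearMap.smul_apply,
    LinearMap.id_apply, inner_add_right, real_inner_smul_right, real_inner_self_eq_norm_sq]
  linarith

end Matrix

theorem unsuccessful_iteration_gamma_bound_general
    (n : ℕ) (f : EuclideanSpace ℝ (Fin n) → ℝ)
    (hf : ContDiff ℝ 1 f)
    (L : ℝ)
    (hLip : ∀ x y : EuclideanSpace ℝ (Fin n), ‖∇ f x - ∇ f y‖ ≤ L * ‖x - y‖)
    (u : EuclideanSpace ℝ (Fin n))
    (g : EuclideanSpace ℝ (Fin n)) (hg : g = ∇ f u)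
    (H : Matrix (Fin n) (Fin n) ℝ) (hH : H.PosSemidef)
    (M_H : ℝ) (hMH : 0 < M_H)
    (γ : ℝ) (hγ : 0 < γ)
    (η : ℝ) (hη : η ∈ Set.Ioo (0:ℝ) 1)
    (A : Matrix (Fin n) (Fin n) ℝ) (hA : A = H + γ • (1 : Matrix (Fin n) (Fin n) ℝ))
    (mγ : EuclideanSpace ℝ (Fin n) → ℝ)
    (hmγ : ∀ s, mγ s = f u + ⟪g, s⟫ + (1/2) * ⟪s, Matrix.toEuclideanLin A s⟫)
    (sstar : EuclideanSpace ℝ (Fin n)) (hsstar : sstar = -(Matrix.toEuclideanLin A⁻¹ g))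
    (hunsucc : f (u + sstar) - f u > η * (mγ sstar - mγ 0)) :
    (2 - η) * γ^2 - (L - M_H) * γ - L * M_H < 0 ∧
      γ < (L - M_H + Real.sqrt ((L - M_H)^2 + 4 * (2 - η) * L * M_H)) / (2 * (2 - η)) := by
  obtain ⟨-, hη1⟩ := hη
  have hAunit : IsUnit A := hA ▸ (PosDef.posSemidef_add hH (PosDef.one.smul hγ)).isUnit
  have hAs : toEuclideanLin A sstar = -g := by
    rw [hsstar, map_neg, toEuclideanLin_apply_toEuclideanLin_inv hAunit]
  have hcurv : γ * ‖sstar‖ ^ 2 ≤ -⟪g, sstar⟫ := by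
    have := hA ▸ hH.mul_norm_sq_le_inner_add_smul_one γ sstar
    rwa [hAs, inner_neg_right, real_inner_comm] at this
  have hmodel : mγ sstar - mγ 0 = 1 / 2 * ⟪g, sstar⟫ := by
    rw [hmγ, hmγ, hAs, map_zero, inner_zero_right, inner_zero_right, inner_neg_right,
      real_inner_comm]
    ring
  subst hg
  have hLγ := two_sub_mul_lt_of_unsuccessful_step (hf.differentiable one_ne_zero) hLip
    (by linarith) hcurv (hmodel ▸ hunsucc)
  have hquad := quadratic_neg_of_two_sub_mul_lt hη1.le hγ hMH.le hLγ
  exact ⟨hquad, by simpa only [mul_assoc] using lt_quadratic_root_of_neg (by linarith) hquad⟩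

/-- If the exact-step iteration is unsuccessful, then
`(2-η)γ² - (L - M_H)γ - L·M_H < 0`, hence
`γ < (L - M_H + √((L-M_H)² + 4(2-η) L M_H)) / (2(2-η))`. -/
theorem unsuccessful_iteration_gamma_bound
    (n : ℕ) (f : EuclideanSpace ℝ (Fin n) → ℝ)
    (hf : ContDiff ℝ 1 f)
    (L : ℝ) (hL : 0 < L)
    (hLip : ∀ x y : EuclideanSpace ℝ (Fin n), ‖∇ f x - ∇ f y‖ ≤ L * ‖x - y‖)
    (u : EuclideanSpace ℝ (Fin n))
    (g : EuclideanSpace ℝ (Fin n)) (hg : g = ∇ f u) (hg0 : g ≠ 0)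
    (H : Matrix (Fin n) (Fin n) ℝ) (hH : H.PosSemidef)
    (M_H : ℝ) (hMH : 0 < M_H) (hHbd : ‖H‖ ≤ M_H)
    (γ : ℝ) (hγ : 0 < γ)
    (η : ℝ) (hη : η ∈ Set.Ioo (0:ℝ) 1)
    (A : Matrix (Fin n) (Fin n) ℝ) (hA : A = H + γ • (1 : Matrix (Fin n) (Fin n) ℝ))
    (mγ : EuclideanSpace ℝ (Fin n) → ℝ)
    (hmγ : ∀ s, mγ s = f u + ⟪g, s⟫ + (1/2) * ⟪s, Matrix.toEuclideanLin A s⟫)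
    (sstar : EuclideanSpace ℝ (Fin n)) (hsstar : sstar = -(Matrix.toEuclideanLin A⁻¹ g))
    (hunsucc : f (u + sstar) - f u > η * (mγ sstar - mγ 0)) :
    (2 - η) * γ^2 - (L - M_H) * γ - L * M_H < 0 ∧
      γ < (L - M_H + Real.sqrt ((L - M_H)^2 + 4 * (2 - η) * L * M_H)) / (2 * (2 - η)) :=
  unsuccessful_iteration_gamma_bound_general n f hf L hLip u g hg H hH M_H hMH γ hγ η hη A hA mγ hmγ
    sstar hsstar hunsucc
end

section
/- Let (J_k)_{k∈ℕ} be a nonincreasing sequence of nonnegative reals with J_0 > 0, let q ∈ (0,1) and ε_R > 0 with ε_R² ≤ 2J_0, and let S ⊆ ℕ be a set of indices such that every k ∈ S satisfies J_k ≥ (1/2)ε_R² and J_{k+1} ≤ (1 − q) J_k. Then S is finite and its cardinality satisfies |S| ≤ 1 + (1/q)·ln(2 J_0 / ε_R²). -/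
/-- If `(J_k)` is nonincreasing and nonnegative with `J_0 > 0`,
`q ∈ (0,1)`, `ε_R > 0` with `ε_R² ≤ 2J_0`, and every `k ∈ S` satisfies
`J_k ≥ ε_R²/2` and `J_{k+1} ≤ (1-q)J_k`, then `S` is finite with
`|S| ≤ 1 + (1/q)·ln(2J_0/ε_R²)`. -/
theorem geometric_decrease_iteration_count
    (J : ℕ → ℝ) (hmono : ∀ k, J (k + 1) ≤ J k) (hnonneg : ∀ k, 0 ≤ J k)
    (hJ0 : 0 < J 0)
    (q : ℝ) (hq : q ∈ Set.Ioo (0:ℝ) 1)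
    (ε_R : ℝ) (hεR : 0 < ε_R) (hεRJ0 : ε_R^2 ≤ 2 * J 0)
    (S : Set ℕ)
    (hS : ∀ k ∈ S, (1/2) * ε_R^2 ≤ J k ∧ J (k + 1) ≤ (1 - q) * J k) :
    S.Finite ∧ (Nat.card S : ℝ) ≤ 1 + (1/q) * Real.log (2 * J 0 / ε_R^2) := by
  classical
  obtain ⟨hq0, hq1⟩ := hq
  have h1q0 : (0:ℝ) < 1 - q := by linarith
  have h1q1 : 1 - q ≤ 1 := by linarith
  set cnt : ℕ → ℕ := fun k => ((Finset.range k).filter (· ∈ S)).card with hcnt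
  have key : ∀ k, J k ≤ (1 - q) ^ (cnt k) * J 0 := by
    intro k
    induction k with
    | zero => simp [hcnt]
    | succ k ih =>
      have hr : Finset.range (k+1) = insert k (Finset.range k) := Finset.range_add_one
      by_cases hk : k ∈ S
      · have hc : cnt (k+1) = cnt k + 1 := by
          simp only [hcnt, hr, Finset.filter_insert, if_pos hk]
          rw [Finset.card_insert_of_notMem (by simp)]
        calc J (k+1) ≤ (1-q) * J k := (hS k hk).2
          _ ≤ (1-q) * ((1-q)^(cnt k) * J 0) :=
              mul_le_mul_of_nonneg_left ih (le_of_lt h1q0)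
          _ = (1-q)^(cnt (k+1)) * J 0 := by rw [hc]; ring
      · have hc : cnt (k+1) = cnt k := by
          simp only [hcnt, hr, Finset.filter_insert, if_neg hk]
        rw [hc]
        exact le_trans (hmono k) ih
  have hlog : q ≤ -Real.log (1-q) := by
    have h : Real.log (1-q) ≤ -q := by
      rw [Real.log_le_iff_le_exp h1q0]
      have := Real.add_one_le_exp (-q)
      linarith
    linarith
  have hratio : (1:ℝ) ≤ 2 * J 0 / ε_R^2 := by
    rw [le_div_iff₀ (by positivity)]
    linarith
  have hlogratio : 0 ≤ Real.log (2 * J 0 / ε_R^2) := Real.log_nonneg hratio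
  have claim : ∀ T : Finset ℕ, ↑T ⊆ S →
      (T.card : ℝ) ≤ 1 + (1/q) * Real.log (2 * J 0 / ε_R^2) := by
    intro T hT
    rcases T.eq_empty_or_nonempty with rfl | hne
    · simp
      positivity
    · set k := T.max' hne with hk
      have hkS : k ∈ S := hT (T.max'_mem hne)
      have hsub : T.erase k ⊆ (Finset.range k).filter (· ∈ S) := by
        intro i hi
        rw [Finset.mem_erase] at hi
        rw [Finset.mem_filter, Finset.mem_range]
        exact ⟨lt_of_le_of_ne (T.le_max' i hi.2) hi.1, hT hi.2⟩
      have hcard : T.card - 1 ≤ cnt k := by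
        have := Finset.card_le_card hsub
        rw [Finset.card_erase_of_mem (T.max'_mem hne)] at this
        exact this
      have hJk : (1/2) * ε_R^2 ≤ J k := (hS k hkS).1
      set m := T.card - 1 with hm
      have hTc : 1 ≤ T.card := Finset.card_pos.mpr hne
      have hmcard : T.card = m + 1 := by omega
      have hchain : (1/2) * ε_R^2 ≤ (1-q)^m * J 0 := by
        calc (1/2) * ε_R^2 ≤ J k := hJk
          _ ≤ (1-q)^(cnt k) * J 0 := key k
          _ ≤ (1-q)^m * J 0 := by
              apply mul_le_mul_of_nonneg_right _ (le_of_lt hJ0)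
              exact pow_le_pow_of_le_one (le_of_lt h1q0) h1q1 hcard
      have hlhs : 0 < (1/2) * ε_R^2 := by positivity
      have hstep : Real.log ((1/2) * ε_R^2) ≤ Real.log ((1-q)^m * J 0) :=
        Real.log_le_log hlhs hchain
      have hA : Real.log ((1/2) * ε_R^2) = -Real.log 2 + 2 * Real.log ε_R := by
        rw [Real.log_mul (by norm_num) (by positivity), Real.log_pow, one_div,
          Real.log_inv]
        push_cast; ring
      have hB : Real.log ((1-q)^m * J 0)
          = (m:ℝ) * Real.log (1-q) + Real.log (J 0) := by
        rw [Real.log_mul (ne_of_gt (pow_pos h1q0 m)) (ne_of_gt hJ0), Real.log_pow]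
      have hC : Real.log (2 * J 0 / ε_R^2)
          = Real.log 2 + Real.log (J 0) - 2 * Real.log ε_R := by
        rw [Real.log_div (by positivity) (by positivity),
          Real.log_mul (by norm_num) (ne_of_gt hJ0), Real.log_pow]
        push_cast; ring
      rw [hA, hB] at hstep
      have hmbound : (m:ℝ) * (-Real.log (1-q)) ≤ Real.log (2 * J 0 / ε_R^2) := by
        rw [hC, mul_neg]
        linarith
      have hmq : (m:ℝ) * q ≤ Real.log (2 * J 0 / ε_R^2) :=
        le_trans (mul_le_mul_of_nonneg_left hlog (Nat.cast_nonneg m)) hmbound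
      have hfinal : (m:ℝ) ≤ (1/q) * Real.log (2 * J 0 / ε_R^2) := by
        rw [div_mul_eq_mul_div, le_div_iff₀ hq0, one_mul, mul_comm]
        linarith
      rw [hmcard]
      push_cast
      linarith
  have hfin : S.Finite := by
    by_contra hinf
    have hinf' : S.Infinite := hinf
    obtain ⟨T, hTS, hTcard⟩ :=
      hinf'.exists_subset_card_eq (⌈1 + (1/q) * Real.log (2 * J 0 / ε_R^2)⌉₊ + 1)
    have h1 := claim T hTS
    rw [hTcard] at h1
    have hBle := Nat.le_ceil (1 + (1/q) * Real.log (2 * J 0 / ε_R^2))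
    push_cast at h1
    linarith
  refine ⟨hfin, ?_⟩
  have hcard : Nat.card S = hfin.toFinset.card :=
    Nat.card_eq_card_finite_toFinset hfin
  rw [hcard]
  exact claim hfin.toFinset (by simp)
end

section
/- Let N be a positive integer, γ_min > 0, γ_max ≥ γ_min, and let (γ_k)_{0 ≤ k ≤ N} be positive reals with γ_0 ≥ γ_min and γ_k ≤ γ_max for all k ≤ N. Suppose each index k < N is either successful (k ∈ S), in which case γ_{k+1} ≥ γ_min, or unsuccessful (k ∈ U), in which case γ_{k+1} = 2γ_k. Then the number of unsuccessful indices satisfies |U| ≤ ⌈1 + log₂(γ_max / γ_min)⌉ · (|S| + 1). -/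
/-- If the regularization parameters stay in `[γ_min, γ_max]`, are at
least `γ_min` after a successful iteration and double on unsuccessful iterations,
then `|U| ≤ ⌈1 + log₂(γ_max/γ_min)⌉ · (|S| + 1)`. -/
theorem unsuccessful_iterations_bound
    (N : ℕ) (hN : 0 < N)
    (γmin γmax : ℝ) (hγmin : 0 < γmin) (hγmax : γmin ≤ γmax)
    (γ : ℕ → ℝ) (hpos : ∀ k, 0 < γ k)
    (hγ0 : γmin ≤ γ 0) (hbd : ∀ k ≤ N, γ k ≤ γmax)
    (S U : Finset ℕ)
    (hpart : S ∪ U = Finset.range N) (hdisj : Disjoint S U)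
    (hS : ∀ k ∈ S, γmin ≤ γ (k + 1))
    (hU : ∀ k ∈ U, γ (k + 1) = 2 * γ k) :
    (U.card : ℝ) ≤ (⌈(1:ℝ) + Real.logb 2 (γmax / γmin)⌉ : ℝ) * (S.card + 1) := by
  have hr1 : (1:ℝ) ≤ γmax / γmin := (one_le_div hγmin).2 hγmax
  have hlogb : 0 ≤ Real.logb 2 (γmax / γmin) := Real.logb_nonneg one_lt_two hr1
  set C : ℕ := (⌈(1:ℝ) + Real.logb 2 (γmax / γmin)⌉).toNat with hCdef
  have hCcast : (C : ℝ) = ((⌈(1:ℝ) + Real.logb 2 (γmax / γmin)⌉ : ℤ) : ℝ) := by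
    have h0 : (0:ℤ) ≤ ⌈(1:ℝ) + Real.logb 2 (γmax / γmin)⌉ := Int.ceil_nonneg (by linarith)
    rw [hCdef]
    exact_mod_cast congrArg (Int.cast : ℤ → ℝ) (Int.toNat_of_nonneg h0)
  have keyArith : ∀ m : ℕ, (2:ℝ)^m * γmin ≤ γmax → m ≤ C := by
    intro m hm
    have h2 : (2:ℝ)^m ≤ γmax / γmin := (le_div_iff₀ hγmin).2 hm
    have hlog : (m:ℝ) ≤ Real.logb 2 (γmax / γmin) := by
      have h3 : Real.logb 2 ((2:ℝ)^m) ≤ Real.logb 2 (γmax / γmin) :=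
        Real.logb_le_logb_of_le one_lt_two (by positivity) h2
      rwa [Real.logb_pow, Real.logb_self_eq_one (by norm_num : (1:ℝ) < 2), mul_one] at h3
    have : (m:ℝ) ≤ ((⌈(1:ℝ) + Real.logb 2 (γmax / γmin)⌉ : ℤ) : ℝ) := by
      have := Int.le_ceil ((1:ℝ) + Real.logb 2 (γmax / γmin))
      linarith
    rw [← hCcast] at this
    exact_mod_cast this
  have hUN : ∀ u ∈ U, u < N := fun u hu =>
    Finset.mem_range.1 (hpart ▸ Finset.mem_union_right S hu)
  have hSU : ∀ k, k < N → k ∉ S → k ∈ U := by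
    intro k hk hkS
    have hk' : k ∈ S ∪ U := hpart ▸ Finset.mem_range.2 hk
    rcases Finset.mem_union.1 hk' with h | h
    · exact absurd h hkS
    · exact h
  have key : ∀ s, (U.filter (fun u => (S ∩ Finset.range u).card = s)).card ≤ C := by
    intro s
    set T := U.filter (fun u => (S ∩ Finset.range u).card = s) with hT
    rcases T.eq_empty_or_nonempty with hTe | hTne
    · simp [hTe]
    set a := T.min' hTne with ha
    set b := T.max' hTne with hb
    have hab : a ≤ b := T.min'_le b (T.max'_mem hTne)
    have haT : a ∈ T := T.min'_mem hTne
    have hbT : b ∈ T := T.max'_mem hTne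
    have haU : a ∈ U := (Finset.mem_filter.1 haT).1
    have hbU : b ∈ U := (Finset.mem_filter.1 hbT).1
    have has : (S ∩ Finset.range a).card = s := (Finset.mem_filter.1 haT).2
    have hbs : (S ∩ Finset.range b).card = s := (Finset.mem_filter.1 hbT).2
    have hbN : b < N := hUN b hbU
    have hnotS : ∀ k, a ≤ k → k ≤ b → k ∉ S := by
      intro k hak hkb hkS
      have hkb' : k < b := lt_of_le_of_ne hkb (by
        rintro rfl; exact (Finset.disjoint_left.1 hdisj hkS) hbU)
      have hlt : (S ∩ Finset.range a).card < (S ∩ Finset.range b).card := by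
        apply Finset.card_lt_card
        constructor
        · exact Finset.inter_subset_inter le_rfl (Finset.range_subset_range.2 hab)
        · intro hsub
          have : k ∈ S ∩ Finset.range a := hsub (Finset.mem_inter.2 ⟨hkS, Finset.mem_range.2 hkb'⟩)
          have := Finset.mem_range.1 (Finset.mem_inter.1 this).2
          omega
      omega
    have hinU : ∀ k, a ≤ k → k ≤ b → k ∈ U := fun k hak hkb =>
      hSU k (lt_of_le_of_lt hkb hbN) (hnotS k hak hkb)
    have hcards : ∀ k, a ≤ k → k ≤ b → (S ∩ Finset.range k).card = s := by
      intro k hak hkb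
      have h1 : (S ∩ Finset.range a).card ≤ (S ∩ Finset.range k).card :=
        Finset.card_le_card (Finset.inter_subset_inter le_rfl (Finset.range_subset_range.2 hak))
      have h2 : (S ∩ Finset.range k).card ≤ (S ∩ Finset.range b).card :=
        Finset.card_le_card (Finset.inter_subset_inter le_rfl (Finset.range_subset_range.2 hkb))
      omega
    have hIccT : Finset.Icc a b ⊆ T := by
      intro k hk
      rw [Finset.mem_Icc] at hk
      exact Finset.mem_filter.2 ⟨hinU k hk.1 hk.2, hcards k hk.1 hk.2⟩
    have hTIcc : T ⊆ Finset.Icc a b := fun k hk =>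
      Finset.mem_Icc.2 ⟨T.min'_le k hk, T.le_max' k hk⟩
    have hTcard : T.card = b - a + 1 := by
      rw [Finset.Subset.antisymm hTIcc hIccT, Nat.card_Icc]
      omega
    have hga : γmin ≤ γ a := by
      rcases Nat.eq_zero_or_pos a with ha0 | ha0
    -- a = 0
      · rw [ha0]; exact hγ0
      · obtain ⟨a', ha'⟩ : ∃ a', a = a' + 1 := ⟨a - 1, by omega⟩
        by_cases hc : a' ∈ S
        · rw [ha']; exact hS a' hc
        · exfalso
          have ha'U : a' ∈ U := hSU a' (by omega) hc
          have hmem : a' ∈ T := by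
            refine Finset.mem_filter.2 ⟨ha'U, ?_⟩
            have hre : S ∩ Finset.range (a' + 1) = S ∩ Finset.range a' := by
              ext x
              simp only [Finset.mem_inter, Finset.mem_range]
              constructor
              · rintro ⟨hxS, hx⟩
                refine ⟨hxS, ?_⟩
                rcases Nat.lt_succ_iff_lt_or_eq.1 hx with h | rfl
                · exact h
                · exact absurd hxS hc
              · rintro ⟨hxS, hx⟩; exact ⟨hxS, by omega⟩
            rw [← hre, ← ha']; exact has
          have := T.min'_le a' hmem
          omega
    have hdouble : ∀ m, a + m ≤ b → γ (a + m + 1) = 2 ^ (m + 1) * γ a := by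
      intro m
      induction m with
      | zero => intro _; simpa using hU a haU
      | succ n ih =>
        intro h
        have h1 := ih (by omega)
        have h2 := hU (a + n + 1) (hinU _ (by omega) (by omega))
        have : a + (n + 1) + 1 = (a + n + 1) + 1 := by omega
        rw [this, h2, h1]; ring
    have hfin : (2:ℝ)^(b - a + 1) * γmin ≤ γmax := by
      have hg := hdouble (b - a) (by omega)
      have heq : a + (b - a) + 1 = b + 1 := by omega
      rw [heq] at hg
      have hle : γ (b + 1) ≤ γmax := hbd (b + 1) (by omega)
      have : (2:ℝ)^(b - a + 1) * γmin ≤ (2:ℝ)^(b - a + 1) * γ a := by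
        apply mul_le_mul_of_nonneg_left hga (by positivity)
      linarith [hg ▸ hle]
    have := keyArith (b - a + 1) hfin
    omega
  have hcardsum : U.card = ∑ s ∈ Finset.range (S.card + 1),
      (U.filter (fun u => (S ∩ Finset.range u).card = s)).card := by
    apply Finset.card_eq_sum_card_fiberwise
    intro u hu
    exact Finset.mem_range.2 (Nat.lt_succ_of_le (Finset.card_le_card Finset.inter_subset_left))
  have hUC : U.card ≤ C * (S.card + 1) := by
    rw [hcardsum]
    calc ∑ s ∈ Finset.range (S.card + 1),
        (U.filter (fun u => (S ∩ Finset.range u).card = s)).card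
        ≤ ∑ _s ∈ Finset.range (S.card + 1), C := Finset.sum_le_sum (fun s _ => key s)
      _ = C * (S.card + 1) := by
          rw [Finset.sum_const, Finset.card_range, smul_eq_mul, mul_comm]
  have : (U.card : ℝ) ≤ (C : ℝ) * (S.card + 1) := by
    have := hUC
    push_cast
    exact_mod_cast Nat.cast_le.2 hUC |>.trans_eq (by push_cast; ring)
  rw [hCcast] at this
  exact this
end

section
/- Consider the regularization algorithm for least squares: f(u) = (1/2)‖R̂(u)‖² where R̂ : ℝⁿ → ℝ^m is continuously differentiable with Jacobian Ĝ, and ∇f is L-Lipschitz continuous. Let η ∈ (0,1), 0 < γ_min ≤ γ_0, and generate sequences (u_k), (γ_k) as follows: at iteration k set g_k = Ĝ(u_k)ᵀR̂(u_k), pick a symmetric positive semidefinite H_k with ‖H_k‖ ≤ M_H, set s_k = −(H_k + γ_k I)⁻¹ g_k and m_k(s) = f(u_k) + g_kᵀs + (1/2)sᵀ(H_k + γ_k I)s; if f(u_k) − f(u_k + s_k) ≥ η(m_k(0) − m_k(s_k)) then u_{k+1} = u_k + s_k and γ_{k+1} = max{γ_k/2, γ_min} (successful iteration), otherwise u_{k+1}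 = u_k and γ_{k+1} = 2γ_k. Let γ̄ = (L − M_H + √((L − M_H)² + 4(2−η)L M_H))/(2(2−η)) and γ_max = max{1, γ_0, 2γ̄}. Fix ε_R > 0 with ε_R² ≤ 2f(u_0) and ε_g ∈ (0,1), and let N be such that for every k ≤ N one has ‖R̂(u_k)‖ > ε_R and ‖g_k‖ > ε_g‖R̂(u_k)‖ (and g_k ≠ 0). Then the number of successful iterations among 0,…,N−1 is at most 1 + ((M_H + γ_max)/(η ε_g²))·ln(2 f(u_0)/ε_R²), and the total number of iterations satisfies N ≤ (1 + ⌈1 + log₂(γ_max/γ_min)⌉)·(2 + ((M_H + γ_max)/(η ε_g²))·ln(2 f(u_0)/ε_R²)). -/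
/-!
An accepted step `s = -(H + γ I)⁻¹ g` decreases the model by
`⟪s, (H + γ I) s⟫ / 2 ≥ ‖g‖² / (2 (M_H + γ))`, and `‖g‖ > ε_g ‖R̂‖` before stationarity, so every
successful iteration contracts `‖R̂‖²` by the factor `1 - η ε_g² / (M_H + γ_max)`; since
`‖R̂(u_N)‖ > ε_R`, the number of successful iterations is logarithmic in `2 f(u_0) / ε_R²`.
By the descent lemma every iteration with `(2 - η) γ_k ≥ L` is successful, which keeps
`γ_k ≤ γ_max`. Unsuccessful iterations double `γ` and successful ones at most halve it, so there
are at most `log₂ (γ_max / γ_min)` more unsuccessful than successful iterations.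
-/

open Finset Matrix
open scoped Matrix.Norms.L2Operator RealInnerProductSpace Gradient

section Calculus

variable {E : Type*} [NormedAddCommGroup E] [InnerProductSpace ℝ E] [CompleteSpace E]

theorem descent_lemma {f : E → ℝ} (hf : Differentiable ℝ f) {L : ℝ}
    (hLip : ∀ x y, ‖∇ f x - ∇ f y‖ ≤ L * ‖x - y‖) (x v : E) :
    f (x + v) ≤ f x + ⟪∇ f x, v⟫ + L / 2 * ‖v‖ ^ 2 := by
  let φ : ℝ → ℝ := fun t => f (x + t • v) - t * ⟪∇ f x, v⟫ - L / 2 * ‖v‖ ^ 2 * t ^ 2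
  have hφ : ∀ t, HasDerivAt φ (⟪∇ f (x + t • v) - ∇ f x, v⟫ - L * ‖v‖ ^ 2 * t) t := by
    intro t
    have hline : HasDerivAt (fun t : ℝ => x + t • v) v t := by
      simpa using ((hasDerivAt_id t).smul_const v).const_add x
    have hft := (hf (x + t • v)).hasGradientAt.hasFDerivAt.comp_hasDerivAt t hline
    rw [InnerProductSpace.toDual_apply_apply] at hft
    refine ((hft.sub ((hasDerivAt_id t).mul_const ⟪∇ f x, v⟫)).sub
      (((hasDerivAt_id t).pow 2).const_mul (L / 2 * ‖v‖ ^ 2))).congr_deriv ?_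
    simp only [inner_sub_left, id]
    ring
  have hanti : AntitoneOn φ (Set.Ici 0) := by
    refine antitoneOn_of_hasDerivWithinAt_nonpos (convex_Ici 0)
      (fun t _ => (hφ t).continuousAt.continuousWithinAt)
      (fun t _ => (hφ t).hasDerivWithinAt) fun t ht => sub_nonpos.mpr ?_
    rw [interior_Ici] at ht
    calc ⟪∇ f (x + t • v) - ∇ f x, v⟫ ≤ ‖∇ f (x + t • v) - ∇ f x‖ * ‖v‖ :=
          real_inner_le_norm _ _
      _ ≤ L * ‖t • v‖ * ‖v‖ := by
          gcongr
          simpa using hLip (x + t • v) x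
      _ = L * ‖v‖ ^ 2 * t := by
          rw [norm_smul, Real.norm_of_nonneg ht.le]; ring
  have h01 := hanti Set.self_mem_Ici (Set.mem_Ici.mpr zero_le_one) zero_le_one
  simp only [φ, zero_smul, one_smul, add_zero] at h01
  linarith

theorem hasGradientAt_half_sq_norm {F : Type*} [NormedAddCommGroup F] [InnerProductSpace ℝ F]
    {R : E → F} {R' : E →L[ℝ] F} {x g : E} (hR : HasFDerivAt R R' x)
    (hg : ∀ v, ⟪R x, R' v⟫ = ⟪g, v⟫) :
    HasGradientAt (fun y => 1 / 2 * ‖R y‖ ^ 2) g x := by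
  rw [hasGradientAt_iff_hasFDerivAt]
  refine (hR.norm_sq.const_mul (1 / 2)).congr_fderiv ?_
  ext v
  simp [hg]

end Calculus

namespace Matrix

theorem inner_toEuclideanLin_transpose {m n : Type*} [Fintype m] [Fintype n] [DecidableEq m]
    [DecidableEq n] (M : Matrix m n ℝ) (y : EuclideanSpace ℝ m) (x : EuclideanSpace ℝ n) :
    ⟪toEuclideanLin Mᵀ y, x⟫ = ⟪y, toEuclideanLin M x⟫ := by
  rw [← conjTranspose_eq_transpose_of_trivial, toEuclideanLin_conjTranspose_eq_adjoint]
  exact LinearMap.adjoint_inner_left _ _ _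

theorem norm_toEuclideanLin_apply_le {m n : Type*} [Fintype m] [Fintype n] [DecidableEq n]
    (M : Matrix m n ℝ) (x : EuclideanSpace ℝ n) : ‖toEuclideanLin M x‖ ≤ ‖M‖ * ‖x‖ := by
  rw [l2_opNorm_def]
  exact (toEuclideanLin M).toContinuousLinearMap.le_opNorm x

variable {n : Type*} [Fintype n] [DecidableEq n]

theorem toEuclideanLin_mul_apply (A B : Matrix n n ℝ) (x : EuclideanSpace ℝ n) :
    toEuclideanLin (A * B) x = toEuclideanLin A (toEuclideanLin B x) := by
  simp

theorem toEuclideanLin_apply_toEuclideanLin_inv_s10 {A : Matrix n n ℝ} (hA : IsUnit A)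
    (x : EuclideanSpace ℝ n) : toEuclideanLin A (toEuclideanLin A⁻¹ x) = x := by
  rw [← toEuclideanLin_mul_apply, mul_nonsing_inv A ((isUnit_iff_isUnit_det A).mp hA)]
  simp

theorem l2_opNorm_add_smul_one_le (H : Matrix n n ℝ) {c : ℝ} (hc : 0 ≤ c) :
    ‖H + c • (1 : Matrix n n ℝ)‖ ≤ ‖H‖ + c := by
  refine (norm_add_le _ _).trans (add_le_add_right ?_ _)
  rw [norm_smul, Real.norm_of_nonneg hc]
  refine mul_le_of_le_one_right hc ?_
  rw [l2_opNorm_def]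
  exact ContinuousLinearMap.opNorm_le_bound _ zero_le_one fun x => by simp

theorem PosSemidef.inner_toEuclideanLin_nonneg {A : Matrix n n ℝ} (hA : A.PosSemidef)
    (x : EuclideanSpace ℝ n) : 0 ≤ ⟪x, toEuclideanLin A x⟫ :=
  (isPositive_toEuclideanLin_iff.mpr hA).inner_nonneg_right x

open scoped MatrixOrder in
theorem PosSemidef.sq_norm_toEuclideanLin_le {A : Matrix n n ℝ} (hA : A.PosSemidef)
    (x : EuclideanSpace ℝ n) :
    ‖toEuclideanLin A x‖ ^ 2 ≤ ‖A‖ * ⟪x, toEuclideanLin A x⟫ := by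
  obtain ⟨B, hBt, hBB⟩ : ∃ B : Matrix n n ℝ, Bᵀ = B ∧ B * B = A :=
    ⟨CFC.sqrt A, (CFC.sqrt_nonneg A).posSemidef.isHermitian,
      CFC.sqrt_mul_sqrt_self A hA.nonneg⟩
  have hAx : toEuclideanLin A x = toEuclideanLin B (toEuclideanLin B x) := by
    rw [← hBB, toEuclideanLin_mul_apply]
  have hnorm : ‖A‖ = ‖B‖ ^ 2 := by
    rw [← hBB, sq, ← l2_opNorm_conjTranspose_mul_self, conjTranspose_eq_transpose_of_trivial, hBt]
  have hinner : ⟪x, toEuclideanLin A x⟫ = ‖toEuclideanLin B x‖ ^ 2 := by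
    rw [hAx, ← inner_toEuclideanLin_transpose, hBt, real_inner_comm, real_inner_self_eq_norm_sq]
  rw [hnorm, hinner, hAx, ← mul_pow]
  exact pow_le_pow_left₀ (norm_nonneg _) (norm_toEuclideanLin_apply_le B _) 2

theorem PosSemidef.mul_sq_norm_le_inner_add_smul_one {H : Matrix n n ℝ} (hH : H.PosSemidef)
    (c : ℝ) (x : EuclideanSpace ℝ n) :
    c * ‖x‖ ^ 2 ≤ ⟪x, toEuclideanLin (H + c • (1 : Matrix n n ℝ)) x⟫ := by
  have hx : toEuclideanLin (H + c • 1) x = toEuclideanLin H x + c • x := by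
    ext; simp
  rw [hx, inner_add_right, real_inner_smul_right, real_inner_self_eq_norm_sq]
  linarith [hH.inner_toEuclideanLin_nonneg x]

end Matrix

theorem hasGradientAt_half_sq_norm_of_hasFDerivAt_toEuclideanLin {m n : Type*} [Fintype m]
    [Fintype n] [DecidableEq m] [DecidableEq n] {R : EuclideanSpace ℝ n → EuclideanSpace ℝ m}
    {G : Matrix m n ℝ} {x : EuclideanSpace ℝ n}
    (hR : HasFDerivAt R (toEuclideanLin G).toContinuousLinearMap x) :
    HasGradientAt (fun y => 1 / 2 * ‖R y‖ ^ 2) (toEuclideanLin Gᵀ (R x)) x := by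
  have hinner : ∀ v, ⟪R x, (toEuclideanLin G).toContinuousLinearMap v⟫ =
      ⟪toEuclideanLin Gᵀ (R x), v⟫ :=
    fun v => (inner_toEuclideanLin_transpose G (R x) v).symm
  exact hasGradientAt_half_sq_norm hR hinner

section RegularizedStep

variable {n : Type*} [Fintype n] [DecidableEq n]

noncomputable def regularizedStep (H : Matrix n n ℝ) (γ : ℝ) (g : EuclideanSpace ℝ n) :
    EuclideanSpace ℝ n :=
  -(toEuclideanLin (H + γ • (1 : Matrix n n ℝ))⁻¹ g)

variable {H : Matrix n n ℝ} {γ : ℝ}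

theorem toEuclideanLin_regularizedStep (hH : H.PosSemidef) (hγ : 0 < γ)
    (g : EuclideanSpace ℝ n) :
    toEuclideanLin (H + γ • 1) (regularizedStep H γ g) = -g := by
  have hA : (H + γ • (1 : Matrix n n ℝ)).PosDef := PosDef.posSemidef_add hH (PosDef.one.smul hγ)
  rw [regularizedStep, map_neg, toEuclideanLin_apply_toEuclideanLin_inv_s10 hA.isUnit]

theorem inner_regularizedStep (hH : H.PosSemidef) (hγ : 0 < γ) (g : EuclideanSpace ℝ n) :
    ⟪g, regularizedStep H γ g⟫ =
      -⟪regularizedStep H γ g, toEuclideanLin (H + γ • 1) (regularizedStep H γ g)⟫ := by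
  rw [toEuclideanLin_regularizedStep hH hγ, inner_neg_right, neg_neg, real_inner_comm]

theorem sq_norm_le_inner_regularizedStep (hH : H.PosSemidef) (hγ : 0 < γ)
    (g : EuclideanSpace ℝ n) :
    ‖g‖ ^ 2 ≤ (‖H‖ + γ) *
      ⟪regularizedStep H γ g, toEuclideanLin (H + γ • 1) (regularizedStep H γ g)⟫ := by
  have hA : (H + γ • (1 : Matrix n n ℝ)).PosSemidef := hH.add (PosSemidef.one.smul hγ.le)
  calc ‖g‖ ^ 2 = ‖toEuclideanLin (H + γ • 1) (regularizedStep H γ g)‖ ^ 2 := by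
        rw [toEuclideanLin_regularizedStep hH hγ, norm_neg]
    _ ≤ ‖H + γ • 1‖ *
          ⟪regularizedStep H γ g, toEuclideanLin (H + γ • 1) (regularizedStep H γ g)⟫ :=
        hA.sq_norm_toEuclideanLin_le _
    _ ≤ _ := by
        gcongr
        · exact hA.inner_toEuclideanLin_nonneg _
        · exact l2_opNorm_add_smul_one_le H hγ.le

variable {g s : EuclideanSpace ℝ n} {F : ℝ} {m : EuclideanSpace ℝ n → ℝ}

theorem model_sub_model_regularizedStep (hH : H.PosSemidef) (hγ : 0 < γ)
    (hs : s = regularizedStep H γ g)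
    (hm : ∀ v, m v = F + ⟪g, v⟫ + 1 / 2 * ⟪v, toEuclideanLin (H + γ • 1) v⟫) :
    m 0 - m s = ⟪s, toEuclideanLin (H + γ • 1) s⟫ / 2 := by
  rw [hm, hm, hs, inner_regularizedStep hH hγ]
  simp only [map_zero, inner_zero_right, mul_zero, add_zero]
  ring

theorem le_one_sub_mul_of_mul_model_decrease_le (hH : H.PosSemidef) (hγ : 0 < γ)
    {η ε P F' : ℝ} (hη : 0 ≤ η) (hP : ‖H‖ + γ ≤ P) (hs : s = regularizedStep H γ g)
    (hm : ∀ v, m v = F + ⟪g, v⟫ + 1 / 2 * ⟪v, toEuclideanLin (H + γ • 1) v⟫)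
    (hg : ε ^ 2 * (2 * F) ≤ ‖g‖ ^ 2) (hdec : η * (m 0 - m s) ≤ F - F') :
    2 * F' ≤ (1 - η * ε ^ 2 / P) * (2 * F) := by
  rw [model_sub_model_regularizedStep hH hγ hs hm] at hdec
  have hgq := sq_norm_le_inner_regularizedStep hH hγ g
  rw [← hs] at hgq
  have hq : 0 ≤ ⟪s, toEuclideanLin (H + γ • 1) s⟫ :=
    (mul_nonneg hγ.le (sq_nonneg _)).trans (hH.mul_sq_norm_le_inner_add_smul_one γ s)
  have hP₀ : 0 < P := by linarith [norm_nonneg H]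
  rw [sub_mul, one_mul, div_mul_eq_mul_div, le_sub_iff_add_le, ← le_sub_iff_add_le',
    div_le_iff₀ hP₀]
  nlinarith [mul_le_mul_of_nonneg_left hgq hη, mul_le_mul_of_nonneg_right hP (mul_nonneg hη hq),
    mul_le_mul_of_nonneg_left hg hη, norm_nonneg H]

theorem mul_model_decrease_le_of_le_mul {f : EuclideanSpace ℝ n → ℝ} (hf : Differentiable ℝ f)
    {L : ℝ} (hLip : ∀ x y, ‖∇ f x - ∇ f y‖ ≤ L * ‖x - y‖) (hH : H.PosSemidef) (hγ : 0 < γ)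
    {η : ℝ} (hη : η ≤ 2) (hLγ : L ≤ (2 - η) * γ) {x : EuclideanSpace ℝ n} (hg : ∇ f x = g)
    (hs : s = regularizedStep H γ g)
    (hm : ∀ v, m v = F + ⟪g, v⟫ + 1 / 2 * ⟪v, toEuclideanLin (H + γ • 1) v⟫) :
    η * (m 0 - m s) ≤ f x - f (x + s) := by
  have hdescent := descent_lemma hf hLip x s
  rw [hg, hs, inner_regularizedStep hH hγ, ← hs] at hdescent
  have hcurv := hH.mul_sq_norm_le_inner_add_smul_one γ s
  rw [model_sub_model_regularizedStep hH hγ hs hm]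
  nlinarith [mul_le_mul_of_nonneg_right hLγ (sq_nonneg ‖s‖),
    mul_le_mul_of_nonneg_left hcurv (sub_nonneg.mpr hη)]

end RegularizedStep

theorem div_two_sub_le_positive_root {L M η : ℝ} (hL : 0 ≤ L) (hM : 0 ≤ M) (hη : η ≤ 1) :
    L / (2 - η) ≤ (L - M + √((L - M) ^ 2 + 4 * (2 - η) * L * M)) / (2 * (2 - η)) := by
  have h2η : 0 < 2 - η := by linarith
  have hsqrt : L + M ≤ √((L - M) ^ 2 + 4 * (2 - η) * L * M) := by
    apply Real.le_sqrt_of_sq_le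
    nlinarith [mul_nonneg (mul_nonneg hL hM) (sub_nonneg.mpr hη)]
  rw [div_le_div_iff₀ h2η (by positivity)]
  nlinarith

section Update

variable {γ : ℕ → ℝ} {p : ℕ → Prop} {γmin : ℝ}

theorem le_of_regularization_update (hsucc : ∀ k, p k → γ (k + 1) = max (γ k / 2) γmin)
    (hfail : ∀ k, ¬p k → γ (k + 1) = 2 * γ k) (hγmin : 0 ≤ γmin) (h0 : γmin ≤ γ 0) (k : ℕ) :
    γmin ≤ γ k := by
  induction k with
  | zero => exact h0
  | succ k ih =>
    by_cases hk : p k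
    · rw [hsucc k hk]; exact le_max_right _ _
    · rw [hfail k hk]; linarith

theorem regularization_update_le (hsucc : ∀ k, p k → γ (k + 1) = max (γ k / 2) γmin)
    (hfail : ∀ k, ¬p k → γ (k + 1) = 2 * γ k) {c Γ : ℝ} (hthreshold : ∀ k, c ≤ γ k → p k)
    (hΓ : 0 ≤ Γ) (h0 : γ 0 ≤ Γ) (hmin : γmin ≤ Γ) (hc : 2 * c ≤ Γ) (k : ℕ) : γ k ≤ Γ := by
  induction k with
  | zero => exact h0
  | succ k ih =>
    by_cases hk : p k
    · rw [hsucc k hk]; exact max_le (by linarith) hmin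
    · rw [hfail k hk]; linarith [lt_of_not_ge (mt (hthreshold k) hk)]

end Update

theorem le_pow_card_filter_mul_pow {a : ℕ → ℝ} {p : ℕ → Prop} [DecidablePred p] {θ ρ : ℝ}
    (hθ : 0 ≤ θ) (hρ : 0 ≤ ρ) {N : ℕ}
    (hstep : ∀ k < N, a (k + 1) ≤ (if p k then θ else ρ) * a k) :
    a N ≤ θ ^ #{k ∈ range N | p k} * ρ ^ #{k ∈ range N | ¬p k} * a 0 := by
  induction N with
  | zero => simp
  | succ N ih =>
    have hN := ih fun k hk => hstep k (hk.trans N.lt_succ_self)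
    have hlast := hstep N N.lt_succ_self
    rw [card_filter, card_filter, sum_range_succ, sum_range_succ, ← card_filter, ← card_filter]
    by_cases h : p N
    · simp only [h, if_true, not_true_eq_false, if_false, add_zero, pow_succ] at hlast ⊢
      calc a (N + 1) ≤ θ * (θ ^ #{k ∈ range N | p k} * ρ ^ #{k ∈ range N | ¬p k} * a 0) :=
            hlast.trans (by gcongr)
        _ = _ := by ring
    · simp only [h, if_false, not_false_eq_true, if_true, add_zero, pow_succ] at hlast ⊢
      calc a (N + 1) ≤ ρ * (θ ^ #{k ∈ range N | p k} * ρ ^ #{k ∈ range N | ¬p k} * a 0) :=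
            hlast.trans (by gcongr)
        _ = _ := by ring

theorem card_filter_le_inv_mul_log {a : ℕ → ℝ} {p : ℕ → Prop} [DecidablePred p] {c ε : ℝ}
    (hc0 : 0 < c) (hc1 : c < 1) (hε : 0 < ε) {N : ℕ} (hN : ε < a N)
    (hstep : ∀ k < N, a (k + 1) ≤ (if p k then 1 - c else 1) * a k) :
    (#{k ∈ range N | p k} : ℝ) ≤ c⁻¹ * Real.log (a 0 / ε) := by
  set S := #{k ∈ range N | p k}
  have hθ : 0 < 1 - c := by linarith
  have hdecay : ε < (1 - c) ^ S * a 0 := by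
    simpa using hN.trans_le (le_pow_card_filter_mul_pow hθ.le zero_le_one hstep)
  have ha0 : 0 < a 0 := pos_of_mul_pos_right (hε.trans hdecay) (by positivity)
  have hlog := Real.log_lt_log hε hdecay
  rw [Real.log_mul (by positivity) ha0.ne', Real.log_pow] at hlog
  have hc_log : Real.log (1 - c) ≤ -c := by linarith [Real.log_le_sub_one_of_pos hθ]
  rw [inv_mul_eq_div, le_div_iff₀ hc0, Real.log_div ha0.ne' hε.ne']
  nlinarith [mul_le_mul_of_nonneg_left hc_log (Nat.cast_nonneg (α := ℝ) S)]

theorem card_filter_not_le_add_logb {γ : ℕ → ℝ} {p : ℕ → Prop} [DecidablePred p]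
    (hpos : ∀ k, 0 < γ k) {N : ℕ} (hsucc : ∀ k < N, p k → γ k / 2 ≤ γ (k + 1))
    (hfail : ∀ k < N, ¬p k → 2 * γ k ≤ γ (k + 1)) {γmin γmax : ℝ} (hγmin : 0 < γmin)
    (h0 : γmin ≤ γ 0) (hN : γ N ≤ γmax) :
    (#{k ∈ range N | ¬p k} : ℝ) ≤ #{k ∈ range N | p k} + Real.logb 2 (γmax / γmin) := by
  have hstep : ∀ k < N, (γ (k + 1))⁻¹ ≤ (if p k then 2 else 2⁻¹) * (γ k)⁻¹ := by
    intro k hk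
    split_ifs with h
    · rw [← div_eq_mul_inv, le_div_iff₀ (hpos k), inv_mul_le_iff₀ (hpos _)]
      linarith [hsucc k hk h]
    · rw [← mul_inv, inv_le_inv₀ (hpos _) (by linarith [hpos k])]
      exact hfail k hk h
  have h := le_pow_card_filter_mul_pow (a := fun k => (γ k)⁻¹) (p := p) (by norm_num)
    (by norm_num) hstep
  have hγN := hpos N
  have hγ0 := hpos 0
  have hγmax : 0 < γmax := hγN.trans_le hN
  have hgrowth : (2 : ℝ) ^ #{k ∈ range N | ¬p k} ≤
      2 ^ #{k ∈ range N | p k} * (γmax / γmin) := by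
    calc (2 : ℝ) ^ #{k ∈ range N | ¬p k} ≤ 2 ^ #{k ∈ range N | p k} * (γ N / γ 0) := by
          simp only [inv_pow] at h
          field_simp at h ⊢
          exact h
      _ ≤ 2 ^ #{k ∈ range N | p k} * (γmax / γmin) := by gcongr
  have hlog := Real.logb_le_logb_of_le one_lt_two (by positivity) hgrowth
  rw [Real.logb_mul (by positivity) (by positivity), Real.logb_pow, Real.logb_pow,
    Real.logb_self_eq_one one_lt_two] at hlog
  simpa using hlog

theorem Nat.card_setOf_lt_and (p : ℕ → Prop) [DecidablePred p] (N : ℕ) :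
    Nat.card {k : ℕ | k < N ∧ p k} = #{k ∈ range N | p k} := by
  rw [← Set.ncard_coe_finset, ← Nat.card_coe_set_eq]
  congr
  ext
  simp

theorem natCast_le_one_add_ceil_mul {p : ℕ → Prop} [DecidablePred p] {N : ℕ} {ℓ B : ℝ}
    (hF : (#{k ∈ range N | ¬p k} : ℝ) ≤ #{k ∈ range N | p k} + ℓ)
    (hS : (#{k ∈ range N | p k} : ℝ) ≤ B) (hℓ : 0 ≤ ℓ) :
    (N : ℝ) ≤ (1 + ⌈1 + ℓ⌉) * (2 + B) := by
  have hceil : 1 + ℓ ≤ (⌈1 + ℓ⌉ : ℝ) := Int.le_ceil _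
  have hB : 0 ≤ B := (Nat.cast_nonneg _).trans hS
  rw [← card_range N, ← card_filter_add_card_filter_not p, Nat.cast_add]
  nlinarith

theorem exact_regularization_complexity_general
    (n m : ℕ)
    (Rh : EuclideanSpace ℝ (Fin n) → EuclideanSpace ℝ (Fin m))
    (hRh : ContDiff ℝ 1 Rh)
    (Gh : EuclideanSpace ℝ (Fin n) → Matrix (Fin m) (Fin n) ℝ)
    (hJac : ∀ x, fderiv ℝ Rh x = (Matrix.toEuclideanLin (Gh x)).toContinuousLinearMap)
    (f : EuclideanSpace ℝ (Fin n) → ℝ) (hf : ∀ x, f x = (1/2) * ‖Rh x‖^2)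
    (L : ℝ) (hL : 0 < L)
    (hLip : ∀ x y : EuclideanSpace ℝ (Fin n), ‖∇ f x - ∇ f y‖ ≤ L * ‖x - y‖)
    (η : ℝ) (hη : η ∈ Set.Ioo (0:ℝ) 1)
    (γmin : ℝ) (hγmin : 0 < γmin)
    (M_H : ℝ)
    -- the sequences generated by the algorithm
    (u : ℕ → EuclideanSpace ℝ (Fin n)) (γ : ℕ → ℝ) (hγ0 : γmin ≤ γ 0)
    (Hm : ℕ → Matrix (Fin n) (Fin n) ℝ)
    (hHpsd : ∀ k, (Hm k).PosSemidef) (hHbd : ∀ k, ‖Hm k‖ ≤ M_H)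
    (g s : ℕ → EuclideanSpace ℝ (Fin n))
    (hg : ∀ k, g k = Matrix.toEuclideanLin (Gh (u k))ᵀ (Rh (u k)))
    (hs : ∀ k, s k = -(Matrix.toEuclideanLin
      (Hm k + γ k • (1 : Matrix (Fin n) (Fin n) ℝ))⁻¹ (g k)))
    (mdl : ℕ → EuclideanSpace ℝ (Fin n) → ℝ)
    (hmdl : ∀ k v, mdl k v = f (u k) + ⟪g k, v⟫ +
      (1/2) * ⟪v, Matrix.toEuclideanLin (Hm k + γ k • (1 : Matrix (Fin n) (Fin n) ℝ)) v⟫)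
    (Succ : ℕ → Prop)
    (hSucc : ∀ k, Succ k ↔ f (u k) - f (u k + s k) ≥ η * (mdl k 0 - mdl k (s k)))
    (hupS : ∀ k, Succ k → u (k + 1) = u k + s k ∧ γ (k + 1) = max (γ k / 2) γmin)
    (hupU : ∀ k, ¬Succ k → u (k + 1) = u k ∧ γ (k + 1) = 2 * γ k)
    -- the constants of the complexity bound
    (γbar γmax : ℝ)
    (hγbar : γbar = (L - M_H + Real.sqrt ((L - M_H)^2 + 4 * (2 - η) * L * M_H)) /
      (2 * (2 - η)))
    (hγmax : γmax = max 1 (max (γ 0) (2 * γbar)))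
    -- tolerances, and non-stationarity up to iteration N
    (ε_R : ℝ) (hεR : 0 < ε_R)
    (ε_g : ℝ) (hεg : ε_g ∈ Set.Ioo (0:ℝ) 1)
    (N : ℕ)
    (hstat : ∀ k ≤ N, ε_R < ‖Rh (u k)‖ ∧ ε_g * ‖Rh (u k)‖ < ‖g k‖ ∧ g k ≠ 0) :
    (Nat.card {k : ℕ | k < N ∧ Succ k} : ℝ) ≤
        1 + ((M_H + γmax) / (η * ε_g^2)) * Real.log (2 * f (u 0) / ε_R^2) ∧
      (N : ℝ) ≤ (1 + (⌈(1:ℝ) + Real.logb 2 (γmax / γmin)⌉ : ℝ)) *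
        (2 + ((M_H + γmax) / (η * ε_g^2)) * Real.log (2 * f (u 0) / ε_R^2)) := by
  classical
  obtain ⟨hη0, hη1⟩ := hη
  obtain ⟨hεg0, hεg1⟩ := hεg
  have hM : 0 ≤ M_H := (norm_nonneg _).trans (hHbd 0)
  have hγS : ∀ k, Succ k → γ (k + 1) = max (γ k / 2) γmin := fun k h => (hupS k h).2
  have hγU : ∀ k, ¬Succ k → γ (k + 1) = 2 * γ k := fun k h => (hupU k h).2
  have hγpos : ∀ k, 0 < γ k :=
    fun k => hγmin.trans_le (le_of_regularization_update hγS hγU hγmin.le hγ0 k)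
  have hgrad : ∀ x, HasGradientAt f (toEuclideanLin (Gh x)ᵀ (Rh x)) x := fun x => by
    rw [funext hf]
    exact hasGradientAt_half_sq_norm_of_hasFDerivAt_toEuclideanLin
      (hJac x ▸ (hRh.differentiable one_ne_zero x).hasFDerivAt)
  have hsucc : ∀ k, L / (2 - η) ≤ γ k → Succ k := fun k hk =>
    (hSucc k).mpr <| mul_model_decrease_le_of_le_mul (fun x => (hgrad x).differentiableAt) hLip
      (hHpsd k) (hγpos k) (by linarith) ((div_le_iff₀' (by linarith)).mp hk)
      ((hgrad _).gradient.trans (hg k).symm) (hs k) (hmdl k)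
  have hγ0max : γ 0 ≤ γmax := hγmax ▸ le_max_of_le_right (le_max_left _ _)
  have hγmax_one : 1 ≤ γmax := hγmax ▸ le_max_left _ _
  have hγbar_le : 2 * (L / (2 - η)) ≤ γmax :=
    (mul_le_mul_of_nonneg_left (hγbar ▸ div_two_sub_le_positive_root hL.le hM hη1.le)
      zero_le_two).trans (hγmax ▸ le_max_of_le_right (le_max_right _ _))
  have hγub : ∀ k, γ k ≤ γmax := regularization_update_le hγS hγU hsucc (by linarith) hγ0max
    (hγ0.trans hγ0max) hγbar_le
  have hsq : ∀ k, 2 * f (u k) = ‖Rh (u k)‖ ^ 2 := fun k => by rw [hf]; ring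
  set P := M_H + γmax
  have hcontract : ∀ k < N, 2 * f (u (k + 1)) ≤
      (if Succ k then 1 - η * ε_g ^ 2 / P else 1) * (2 * f (u k)) := by
    intro k hk
    split_ifs with h
    · rw [(hupS k h).1]
      refine le_one_sub_mul_of_mul_model_decrease_le (hHpsd k) (hγpos k) hη0.le
        (by linarith [hHbd k, hγub k]) (hs k) (hmdl k) ?_ ((hSucc k).mp h)
      rw [hsq, ← mul_pow]
      exact pow_le_pow_left₀ (by positivity) (hstat k hk.le).2.1.le 2
    · rw [(hupU k h).1, one_mul]
  have hc : η * ε_g ^ 2 / P < 1 := by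
    rw [div_lt_one (by linarith)]
    nlinarith [mul_lt_mul'' hη1 (pow_lt_one₀ hεg0.le hεg1 two_ne_zero) hη0.le (by positivity)]
  have hfN : ε_R ^ 2 < 2 * f (u N) := by
    rw [hsq]; exact pow_lt_pow_left₀ (hstat N le_rfl).1 hεR.le two_ne_zero
  have hS := card_filter_le_inv_mul_log (a := fun k => 2 * f (u k)) (by positivity) hc
    (by positivity) hfN hcontract
  rw [inv_div] at hS
  have hF := card_filter_not_le_add_logb hγpos (fun k _ h => (hγS k h) ▸ le_max_left _ _)
    (fun k _ h => (hγU k h).ge) hγmin hγ0 (hγub N)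
  rw [Nat.card_setOf_lt_and]
  exact ⟨hS.trans (le_add_of_nonneg_left zero_le_one), natCast_le_one_add_ceil_mul hF hS
    (Real.logb_nonneg one_lt_two ((one_le_div hγmin).mpr (hγ0.trans hγ0max)))⟩

/-- Iteration complexity of the exact regularization method for
least squares: the number of successful iterations before reaching an
`(ε_R, ε_g)`-stationary point is at most
`1 + ((M_H+γ_max)/(η ε_g²))·ln(2 f(u_0)/ε_R²)`, and the total number of
iterations is at most
`(1 + ⌈1 + log₂(γ_max/γ_min)⌉)·(2 + ((M_H+γ_max)/(η ε_g²))·ln(2 f(u_0)/ε_R²))`. -/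
theorem exact_regularization_complexity
    (n m : ℕ)
    (Rh : EuclideanSpace ℝ (Fin n) → EuclideanSpace ℝ (Fin m))
    (hRh : ContDiff ℝ 1 Rh)
    (Gh : EuclideanSpace ℝ (Fin n) → Matrix (Fin m) (Fin n) ℝ)
    (hJac : ∀ x, fderiv ℝ Rh x = (Matrix.toEuclideanLin (Gh x)).toContinuousLinearMap)
    (f : EuclideanSpace ℝ (Fin n) → ℝ) (hf : ∀ x, f x = (1/2) * ‖Rh x‖^2)
    (L : ℝ) (hL : 0 < L)
    (hLip : ∀ x y : EuclideanSpace ℝ (Fin n), ‖∇ f x - ∇ f y‖ ≤ L * ‖x - y‖)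
    (η : ℝ) (hη : η ∈ Set.Ioo (0:ℝ) 1)
    (γmin : ℝ) (hγmin : 0 < γmin)
    (M_H : ℝ) (hMH : 0 < M_H)
    -- the sequences generated by the algorithm
    (u : ℕ → EuclideanSpace ℝ (Fin n)) (γ : ℕ → ℝ) (hγ0 : γmin ≤ γ 0)
    (Hm : ℕ → Matrix (Fin n) (Fin n) ℝ)
    (hHpsd : ∀ k, (Hm k).PosSemidef) (hHbd : ∀ k, ‖Hm k‖ ≤ M_H)
    (g s : ℕ → EuclideanSpace ℝ (Fin n))
    (hg : ∀ k, g k = Matrix.toEuclideanLin (Gh (u k))ᵀ (Rh (u k)))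
    (hs : ∀ k, s k = -(Matrix.toEuclideanLin
      (Hm k + γ k • (1 : Matrix (Fin n) (Fin n) ℝ))⁻¹ (g k)))
    (mdl : ℕ → EuclideanSpace ℝ (Fin n) → ℝ)
    (hmdl : ∀ k v, mdl k v = f (u k) + ⟪g k, v⟫ +
      (1/2) * ⟪v, Matrix.toEuclideanLin (Hm k + γ k • (1 : Matrix (Fin n) (Fin n) ℝ)) v⟫)
    (Succ : ℕ → Prop)
    (hSucc : ∀ k, Succ k ↔ f (u k) - f (u k + s k) ≥ η * (mdl k 0 - mdl k (s k)))
    (hupS : ∀ k, Succ k → u (k + 1) = u k + s k ∧ γ (k + 1) = max (γ k / 2) γmin)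
    (hupU : ∀ k, ¬Succ k → u (k + 1) = u k ∧ γ (k + 1) = 2 * γ k)
    -- the constants of the complexity bound
    (γbar γmax : ℝ)
    (hγbar : γbar = (L - M_H + Real.sqrt ((L - M_H)^2 + 4 * (2 - η) * L * M_H)) /
      (2 * (2 - η)))
    (hγmax : γmax = max 1 (max (γ 0) (2 * γbar)))
    -- tolerances, and non-stationarity up to iteration N
    (ε_R : ℝ) (hεR : 0 < ε_R) (hεRJ0 : ε_R^2 ≤ 2 * f (u 0))
    (ε_g : ℝ) (hεg : ε_g ∈ Set.Ioo (0:ℝ) 1)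
    (N : ℕ)
    (hstat : ∀ k ≤ N, ε_R < ‖Rh (u k)‖ ∧ ε_g * ‖Rh (u k)‖ < ‖g k‖ ∧ g k ≠ 0) :
    (Nat.card {k : ℕ | k < N ∧ Succ k} : ℝ) ≤
        1 + ((M_H + γmax) / (η * ε_g^2)) * Real.log (2 * f (u 0) / ε_R^2) ∧
      (N : ℝ) ≤ (1 + (⌈(1:ℝ) + Real.logb 2 (γmax / γmin)⌉ : ℝ)) *
        (2 + ((M_H + γmax) / (η * ε_g^2)) * Real.log (2 * f (u 0) / ε_R^2)) :=
  exact_regularization_complexity_general n m Rh hRh Gh hJac f hf L hL hLip η hη γmin hγmin M_H u γ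
    hγ0 Hm hHpsd hHbd g s hg hs mdl hmdl Succ hSucc hupS hupU γbar γmax hγbar hγmax ε_R hεR ε_g hεg
    N hstat
end

section
/- Let θ ∈ [0,1), suppose ‖H‖ ≤ M_H for some M_H > 0, let g = GᵀR, and suppose s ∈ ℝⁿ satisfies (H + γI)s = −g + t with ‖t‖ ≤ θ √(γ/(‖H‖ + γ)) ‖g‖. Then the model decrease satisfies m_γ(0) − m_γ(s) ≥ ((1 − θ²)/2) · ‖GᵀR‖² / (M_H + γ). -/
open Matrix
open scoped Matrix.Norms.L2Operator RealInnerProductSpace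

/-!
Write `A = H + γ I`, so that `γ ‖x‖² ≤ ⟪x, A x⟫ ≤ (‖H‖ + γ) ‖x‖²`, and solve `A u = g`, `A v = t`.
Then `s = v - u` and the model decrease is `(⟪u, A u⟫ - ⟪v, A v⟫) / 2`.
The first term is at least `‖g‖² / (‖H‖ + γ)`, the second at most
`‖t‖² / γ ≤ θ² ‖g‖² / (‖H‖ + γ)`.
-/

variable {E : Type*} [NormedAddCommGroup E] [InnerProductSpace ℝ E]

noncomputable def quadraticModel (T : E →ₗ[ℝ] E) (g x : E) : ℝ := ⟪g, x⟫ + ⟪x, T x⟫ / 2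

namespace LinearMap

variable {T : E →ₗ[ℝ] E}

theorem mul_inner_map_self_le_norm_sq {γ : ℝ} (hγ : 0 ≤ γ)
    (hlow : ∀ x, γ * ‖x‖ ^ 2 ≤ ⟪x, T x⟫) (x : E) : γ * ⟪x, T x⟫ ≤ ‖T x‖ ^ 2 := by
  have hcs : ⟪x, T x⟫ ≤ ‖x‖ * ‖T x‖ := real_inner_le_norm _ _
  have hnorm : γ * ‖x‖ ≤ ‖T x‖ := by
    rcases (norm_nonneg x).eq_or_lt with hx | hx
    · simp [← hx]
    · nlinarith [hlow x]
  calc γ * ⟪x, T x⟫ ≤ γ * ‖x‖ * ‖T x‖ := by nlinarith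
    _ ≤ ‖T x‖ ^ 2 := by nlinarith [norm_nonneg (T x)]

theorem IsSymmetric.norm_sq_apply_le {β : ℝ} (hT : T.IsSymmetric) (hpos : ∀ x, 0 ≤ ⟪x, T x⟫)
    (hβ : 0 < β) (hup : ∀ x, ⟪x, T x⟫ ≤ β * ‖x‖ ^ 2) (x : E) :
    ‖T x‖ ^ 2 ≤ β * ⟪x, T x⟫ := by
  -- expand the nonnegative form at `β x - T x` and use the upper bound at `T x`
  have hexp : ⟪β • x - T x, T (β • x - T x)⟫
      = β * (β * ⟪x, T x⟫ - 2 * ‖T x‖ ^ 2) + ⟪T x, T (T x)⟫ := by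
    have : ⟪x, T (T x)⟫ = ‖T x‖ ^ 2 := by rw [← hT, real_inner_self_eq_norm_sq]
    simp only [map_sub, map_smul, inner_sub_left, inner_sub_right, real_inner_smul_left,
      real_inner_smul_right, this, real_inner_self_eq_norm_sq]
    ring
  nlinarith [hpos (β • x - T x), hup (T x)]

theorem IsSymmetric.quadraticModel_eq {u v s : E} (hT : T.IsSymmetric) (hs : T s = -T u + T v) :
    quadraticModel T (T u) s = (⟪v, T v⟫ - ⟪u, T u⟫) / 2 := by
  have huv : ⟪u, T v⟫ = ⟪v, T u⟫ := by rw [← hT, real_inner_comm]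
  have hss : ⟪s, T s⟫ = ⟪u, T u⟫ - 2 * ⟪u, T v⟫ + ⟪v, T v⟫ := by
    rw [← hT, hs, inner_add_left, inner_neg_left, hT u, hT v, hs]
    simp only [inner_add_right, inner_neg_right]
    linarith
  rw [quadraticModel, hss, hT, hs, inner_add_right, inner_neg_right]
  ring

theorem IsSymmetric.quadraticModel_le [FiniteDimensional ℝ E] {γ β : ℝ} {g t s : E}
    (hT : T.IsSymmetric) (hγ : 0 < γ) (hβ : 0 < β)
    (hlow : ∀ x, γ * ‖x‖ ^ 2 ≤ ⟪x, T x⟫) (hup : ∀ x, ⟪x, T x⟫ ≤ β * ‖x‖ ^ 2)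
    (hs : T s = -g + t) :
    quadraticModel T g s ≤ -(‖g‖ ^ 2 / β - ‖t‖ ^ 2 / γ) / 2 := by
  have hinj : Function.Injective T := by
    refine (injective_iff_map_eq_zero T).2 fun x hx => ?_
    have hx2 : ‖x‖ ^ 2 ≤ 0 := by nlinarith [hlow x, hx ▸ inner_zero_right (𝕜 := ℝ) x]
    simpa using hx2
  obtain ⟨u, rfl⟩ := injective_iff_surjective.1 hinj g
  obtain ⟨v, rfl⟩ := injective_iff_surjective.1 hinj t
  have hpos : ∀ x, 0 ≤ ⟪x, T x⟫ := fun x => le_trans (by positivity) (hlow x)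
  have hu : ‖T u‖ ^ 2 / β ≤ ⟪u, T u⟫ :=
    (div_le_iff₀' hβ).2 (hT.norm_sq_apply_le hpos hβ hup u)
  have hv : ⟪v, T v⟫ ≤ ‖T v‖ ^ 2 / γ :=
    (le_div_iff₀' hγ).2 (mul_inner_map_self_le_norm_sq hγ.le hlow v)
  rw [hT.quadraticModel_eq hs]
  linarith

end LinearMap

namespace Matrix

variable {ι : Type*} [Fintype ι] [DecidableEq ι]

theorem toEuclideanLin_add_smul_one_apply (H : Matrix ι ι ℝ) (γ : ℝ) (x : EuclideanSpace ℝ ι) :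
    toEuclideanLin (H + γ • 1) x = toEuclideanLin H x + γ • x := by
  simp [map_add]

theorem inner_toEuclideanLin_self_le (A : Matrix ι ι ℝ) (x : EuclideanSpace ℝ ι) :
    ⟪x, toEuclideanLin A x⟫ ≤ ‖A‖ * ‖x‖ ^ 2 :=
  calc ⟪x, toEuclideanLin A x⟫ ≤ ‖x‖ * ‖toEuclideanLin A x‖ := real_inner_le_norm _ _
    _ ≤ ‖x‖ * (‖A‖ * ‖x‖) := by gcongr; exact A.l2_opNorm_mulVec x
    _ = ‖A‖ * ‖x‖ ^ 2 := by ring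

theorem PosSemidef.isSymmetric_toEuclideanLin_add_smul_one {H : Matrix ι ι ℝ} (hH : H.PosSemidef)
    (γ : ℝ) : (toEuclideanLin (H + γ • 1)).IsSymmetric :=
  isSymmetric_toEuclideanLin_iff.2 (hH.1.add (isHermitian_one.smul (IsSelfAdjoint.all γ)))

theorem PosSemidef.mul_norm_sq_le_inner_toEuclideanLin_add_smul_one {H : Matrix ι ι ℝ}
    (hH : H.PosSemidef) (γ : ℝ) (x : EuclideanSpace ℝ ι) :
    γ * ‖x‖ ^ 2 ≤ ⟪x, toEuclideanLin (H + γ • 1) x⟫ := by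
  have := (isPositive_toEuclideanLin_iff.2 hH).inner_nonneg_right x
  rw [toEuclideanLin_add_smul_one_apply, inner_add_right, real_inner_smul_right,
    real_inner_self_eq_norm_sq]
  linarith

theorem inner_toEuclideanLin_add_smul_one_le (H : Matrix ι ι ℝ) (γ : ℝ) (x : EuclideanSpace ℝ ι) :
    ⟪x, toEuclideanLin (H + γ • 1) x⟫ ≤ (‖H‖ + γ) * ‖x‖ ^ 2 := by
  have := H.inner_toEuclideanLin_self_le x
  rw [toEuclideanLin_add_smul_one_apply, inner_add_right, real_inner_smul_right,
    real_inner_self_eq_norm_sq]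
  linarith

end Matrix

theorem inexact_model_decrease_general
    (n m : ℕ)
    (R : EuclideanSpace ℝ (Fin m))
    (H : Matrix (Fin n) (Fin n) ℝ) (hH : H.PosSemidef)
    (γ : ℝ) (hγ : 0 < γ)
    (θ : ℝ) (hθ : θ ∈ Set.Ico (0:ℝ) 1)
    (M_H : ℝ) (hHbd : ‖H‖ ≤ M_H)
    (g : EuclideanSpace ℝ (Fin n))
    (mγ : EuclideanSpace ℝ (Fin n) → ℝ)
    (hmγ : ∀ v, mγ v = (1/2) * ‖R‖^2 + ⟪g, v⟫ +
      (1/2) * ⟪v, Matrix.toEuclideanLin (H + γ • (1 : Matrix (Fin n) (Fin n) ℝ)) v⟫)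
    (s t : EuclideanSpace ℝ (Fin n))
    (hstep : Matrix.toEuclideanLin (H + γ • (1 : Matrix (Fin n) (Fin n) ℝ)) s = -g + t)
    (ht : ‖t‖ ≤ θ * Real.sqrt (γ / (‖H‖ + γ)) * ‖g‖) :
    mγ 0 - mγ s ≥ ((1 - θ^2)/2) * ‖g‖^2 / (M_H + γ) := by
  have hβ : 0 < ‖H‖ + γ := by positivity
  have hdecrease : mγ 0 - mγ s = -quadraticModel (toEuclideanLin (H + γ • 1)) g s := by
    simp only [hmγ, quadraticModel, inner_zero_right, map_zero]
    ring
  have hmodel := (hH.isSymmetric_toEuclideanLin_add_smul_one γ).quadraticModel_le hγ hβ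
    (hH.mul_norm_sq_le_inner_toEuclideanLin_add_smul_one γ)
    (H.inner_toEuclideanLin_add_smul_one_le γ) hstep
  have hresidual : ‖t‖ ^ 2 / γ ≤ θ ^ 2 * ‖g‖ ^ 2 / (‖H‖ + γ) := by
    have hsq := pow_le_pow_left₀ (norm_nonneg t) ht 2
    rw [mul_pow, mul_pow, Real.sq_sqrt (by positivity)] at hsq
    rw [div_le_iff₀ hγ]
    calc ‖t‖ ^ 2 ≤ θ ^ 2 * (γ / (‖H‖ + γ)) * ‖g‖ ^ 2 := hsq
      _ = θ ^ 2 * ‖g‖ ^ 2 / (‖H‖ + γ) * γ := by ring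
  have hθ2 : θ ^ 2 ≤ 1 := by nlinarith [hθ.1, hθ.2]
  rw [hdecrease, ge_iff_le]
  calc (1 - θ ^ 2) / 2 * ‖g‖ ^ 2 / (M_H + γ) ≤ (1 - θ ^ 2) / 2 * ‖g‖ ^ 2 / (‖H‖ + γ) := by
        gcongr
    _ = (‖g‖ ^ 2 / (‖H‖ + γ) - θ ^ 2 * ‖g‖ ^ 2 / (‖H‖ + γ)) / 2 := by ring
    _ ≤ _ := by linarith

/-- An inexact step `s` with `(H+γI)s = -g + t`,
`‖t‖ ≤ θ√(γ/(‖H‖+γ))‖g‖`, `g = GᵀR`, `‖H‖ ≤ M_H`, yields the model decrease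
`m_γ(0) - m_γ(s) ≥ ((1-θ²)/2)·‖GᵀR‖²/(M_H+γ)`. -/
theorem inexact_model_decrease
    (n m : ℕ) (hn : 0 < n) (hm : 0 < m)
    (G : Matrix (Fin m) (Fin n) ℝ) (R : EuclideanSpace ℝ (Fin m))
    (H : Matrix (Fin n) (Fin n) ℝ) (hH : H.PosSemidef)
    (γ : ℝ) (hγ : 0 < γ)
    (θ : ℝ) (hθ : θ ∈ Set.Ico (0:ℝ) 1)
    (M_H : ℝ) (hMH : 0 < M_H) (hHbd : ‖H‖ ≤ M_H)
    (g : EuclideanSpace ℝ (Fin n)) (hg : g = Matrix.toEuclideanLin Gᵀ R)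
    (mγ : EuclideanSpace ℝ (Fin n) → ℝ)
    (hmγ : ∀ v, mγ v = (1/2) * ‖R‖^2 + ⟪g, v⟫ +
      (1/2) * ⟪v, Matrix.toEuclideanLin (H + γ • (1 : Matrix (Fin n) (Fin n) ℝ)) v⟫)
    (s t : EuclideanSpace ℝ (Fin n))
    (hstep : Matrix.toEuclideanLin (H + γ • (1 : Matrix (Fin n) (Fin n) ℝ)) s = -g + t)
    (ht : ‖t‖ ≤ θ * Real.sqrt (γ / (‖H‖ + γ)) * ‖g‖) :
    mγ 0 - mγ s ≥ ((1 - θ^2)/2) * ‖g‖^2 / (M_H + γ) :=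
  inexact_model_decrease_general n m R H hH γ hγ θ hθ M_H hHbd g mγ hmγ s t hstep ht
end

section
/- Consider the inexact regularization algorithm for least squares: f(u) = (1/2)‖R̂(u)‖² where R̂ : ℝⁿ → ℝ^m is continuously differentiable with Jacobian Ĝ, and ∇f is L-Lipschitz continuous. Let η ∈ (0,1), θ ∈ [0,1), 0 < γ_min ≤ γ_0, and generate sequences (u_k), (γ_k) as follows: at iteration k set g_k = Ĝ(u_k)ᵀR̂(u_k), pick a symmetric positive semidefinite H_k with ‖H_k‖ ≤ M_H, choose s_k with (H_k + γ_k I)s_k = −g_k + t_k and ‖t_k‖ ≤ θ√(γ_k/(‖H_k‖+γ_k))‖g_k‖, and set m_k(s) = f(u_k) + g_kᵀs + (1/2)sᵀ(H_k + γ_k I)s; if f(u_k) − f(u_k + s_k) ≥ η(m_k(0) − m_k(s_k)) then u_{k+1} = u_k + s_k and γ_{k+1} = max{γ_k/2, γ_min} (successful iteration), otherwise u_{k+1} = u_k and γ_{k+1} = 2γ_k. Suppose γ_k ≤ Γ for all k, for some Γ ≥ 1. Fix ε_R > 0 with ε_R² ≤ 2f(u_0) and ε_g ∈ (0,1), and let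 N be such that for every k ≤ N one has ‖R̂(u_k)‖ > ε_R and ‖g_k‖ > ε_g‖R̂(u_k)‖ (and g_k ≠ 0). Then the number of successful iterations among 0,…,N−1 is at most 1 + ((M_H + Γ)/(η(1 − θ²) ε_g²))·ln(2 f(u_0)/ε_R²), and the number of unsuccessful iterations among 0,…,N−1 is at most ⌈1 + log₂(Γ/γ_min)⌉ times one plus the number of successful iterations among 0,…,N−1. -/
/-!
Write `B = H_k + γ_k I` and `Λ_k = ‖H_k‖ + γ_k`, so that `γ_k ≤ B ≤ Λ_k`. Since `B s_k = t_k - g_k`,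
the model decrease is `m_k(0) - m_k(s_k) = (⟪g_k, B⁻¹ g_k⟫ - ⟪t_k, B⁻¹ t_k⟫) / 2`, and the two
operator bounds together with the inexactness condition give
`m_k(0) - m_k(s_k) ≥ (1 - θ²) ‖g_k‖² / (2 Λ_k)`. On a successful iteration, `‖g_k‖ > ε_g ‖R̂(u_k)‖`
then turns the acceptance test into `‖R̂(u_{k+1})‖² ≤ (1 - c) ‖R̂(u_k)‖²` with
`c = η (1 - θ²) ε_g² / (M_H + Γ)`, while unsuccessful iterations leave `u_k` unchanged. As
`‖R̂(u_N)‖² > ε_R²`, there are at most `log (2 f(u_0) / ε_R²) / c` successes. Finally every failure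
doubles `γ_k` and every success at most halves it, so `γ_min ≤ γ_k ≤ Γ` bounds the excess of
failures over successes by `log₂ (Γ / γ_min)`.
-/

open Matrix
open scoped Matrix.Norms.L2Operator RealInnerProductSpace Gradient

section RegularizedModel

variable {E : Type*} [NormedAddCommGroup E] [InnerProductSpace ℝ E]

theorem ContinuousLinearMap.IsPositive.norm_apply_sq_le {T : E →L[ℝ] E} (hT : T.IsPositive)
    (x : E) : ‖T x‖ ^ 2 ≤ ‖T‖ * ⟪x, T x⟫ := by
  -- Cauchy–Schwarz for the semi-inner product `⟪·, T ·⟫`, applied to `T x` and `x`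
  have hcs := LinearMap.BilinForm.apply_mul_apply_le_of_forall_zero_le
    ((innerₗ E).compl₂ (T : E →ₗ[ℝ] E)) hT.inner_nonneg_right (T x) x
  simp only [LinearMap.compl₂_apply, innerₗ_apply_apply, ContinuousLinearMap.coe_coe] at hcs
  rw [← hT.inner_left_eq_inner_right x (T x), real_inner_self_eq_norm_sq] at hcs
  have hTT : ⟪T x, T (T x)⟫ ≤ ‖T‖ * ‖T x‖ ^ 2 :=
    calc ⟪T x, T (T x)⟫ ≤ ‖T x‖ * ‖T (T x)‖ := real_inner_le_norm _ _
      _ ≤ ‖T x‖ * (‖T‖ * ‖T x‖) := by gcongr; exact T.le_opNorm _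
      _ = ‖T‖ * ‖T x‖ ^ 2 := by ring
  have hx := hT.inner_nonneg_right x
  rcases (sq_nonneg ‖T x‖).eq_or_lt with h0 | hpos
  · rw [← h0]; positivity
  · nlinarith

theorem inner_apply_le_norm_apply_sq_div {B : E →ₗ[ℝ] E} {γ : ℝ} (hγ : 0 < γ) {x : E}
    (hB : γ * ‖x‖ ^ 2 ≤ ⟪x, B x⟫) : ⟪x, B x⟫ ≤ ‖B x‖ ^ 2 / γ := by
  have hcs := real_inner_le_norm x (B x)
  have hBx : γ * ‖x‖ ≤ ‖B x‖ := by
    rcases (norm_nonneg x).eq_or_lt with hx | hx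
    · rw [← hx, mul_zero]; exact norm_nonneg _
    · nlinarith
  rw [le_div_iff₀ hγ]
  nlinarith [norm_nonneg x, norm_nonneg (B x)]

theorem LinearMap.IsSymmetric.neg_inner_sub_half_inner_sub {B : E →ₗ[ℝ] E} (hB : B.IsSymmetric)
    (v w : E) : -⟪B w, v - w⟫ - 1 / 2 * ⟪v - w, B (v - w)⟫ = 1 / 2 * (⟪w, B w⟫ - ⟪v, B v⟫) := by
  simp only [map_sub, inner_sub_left, inner_sub_right]
  rw [real_inner_comm (B w) v, hB w, hB w]
  ring

theorem model_decrease_of_coercive [FiniteDimensional ℝ E] {B : E →ₗ[ℝ] E}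
    (hB : B.IsSymmetric) {γ Λ θ : ℝ} (hγ : 0 < γ) (hΛ : 0 < Λ)
    (hcoer : ∀ x, γ * ‖x‖ ^ 2 ≤ ⟪x, B x⟫) (hbdd : ∀ x, ‖B x‖ ^ 2 ≤ Λ * ⟪x, B x⟫)
    {g s t : E} (hs : B s = -g + t) (ht : ‖t‖ ^ 2 ≤ θ ^ 2 * (γ / Λ) * ‖g‖ ^ 2) :
    (1 - θ ^ 2) * ‖g‖ ^ 2 / (2 * Λ) ≤ -⟪g, s⟫ - 1 / 2 * ⟪s, B s⟫ := by
  have hinj : Function.Injective B := by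
    refine (injective_iff_map_eq_zero B).2 fun x hx => ?_
    have := hcoer x
    rw [hx, inner_zero_right] at this
    exact norm_eq_zero.1 (pow_eq_zero_iff two_ne_zero |>.1 (by nlinarith [sq_nonneg ‖x‖]))
  -- substituting `g = B w` and `t = B v` avoids `B⁻¹`
  obtain ⟨w, rfl⟩ := LinearMap.injective_iff_surjective.1 hinj g
  obtain ⟨v, rfl⟩ := LinearMap.injective_iff_surjective.1 hinj t
  obtain rfl : s = v - w := hinj (by rw [hs, map_sub]; abel)
  rw [hB.neg_inner_sub_half_inner_sub]
  have hw : ‖B w‖ ^ 2 / Λ ≤ ⟪w, B w⟫ := by rw [div_le_iff₀ hΛ]; linarith [hbdd w]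
  have hv : ⟪v, B v⟫ ≤ θ ^ 2 * ‖B w‖ ^ 2 / Λ :=
    calc ⟪v, B v⟫ ≤ ‖B v‖ ^ 2 / γ := inner_apply_le_norm_apply_sq_div hγ (hcoer v)
      _ ≤ θ ^ 2 * (γ / Λ) * ‖B w‖ ^ 2 / γ := by gcongr
      _ = θ ^ 2 * ‖B w‖ ^ 2 / Λ := by field_simp
  have hsplit : (1 - θ ^ 2) * ‖B w‖ ^ 2 / (2 * Λ) =
      1 / 2 * (‖B w‖ ^ 2 / Λ - θ ^ 2 * ‖B w‖ ^ 2 / Λ) := by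
    field_simp
  linarith

theorem ContinuousLinearMap.IsPositive.model_decrease [FiniteDimensional ℝ E] {A : E →L[ℝ] E}
    (hA : A.IsPositive) {γ θ : ℝ} (hγ : 0 < γ) {g s t : E} (hs : (A + γ • 1) s = -g + t)
    (ht : ‖t‖ ≤ θ * √(γ / (‖A‖ + γ)) * ‖g‖) :
    (1 - θ ^ 2) * ‖g‖ ^ 2 / (2 * (‖A‖ + γ)) ≤ -⟪g, s⟫ - 1 / 2 * ⟪s, (A + γ • 1) s⟫ := by
  have hΛ : 0 < ‖A‖ + γ := by positivity
  have hB : (A + γ • 1).IsPositive := hA.add (isPositive_one.smul_of_nonneg hγ.le)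
  have hnorm : ‖A + γ • 1‖ ≤ ‖A‖ + γ := by
    refine norm_add_le_of_le le_rfl ?_
    rw [norm_smul, Real.norm_of_nonneg hγ.le]
    exact mul_le_of_le_one_right hγ.le norm_id_le
  refine model_decrease_of_coercive (B := ((A + γ • 1 : E →L[ℝ] E) : E →ₗ[ℝ] E))
    hB.isSymmetric hγ hΛ (fun x => ?_) (fun x => ?_) hs ?_
  · simp only [ContinuousLinearMap.coe_coe, _root_.add_apply, _root_.smul_apply,
      one_apply_eq_self, inner_add_right, real_inner_smul_right, real_inner_self_eq_norm_sq]
    linarith [hA.inner_nonneg_right x]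
  · exact (hB.norm_apply_sq_le x).trans (by gcongr; exacts [hB.inner_nonneg_right x, le_rfl])
  · calc ‖t‖ ^ 2 ≤ (θ * √(γ / (‖A‖ + γ)) * ‖g‖) ^ 2 := by gcongr
      _ = θ ^ 2 * (γ / (‖A‖ + γ)) * ‖g‖ ^ 2 := by
        rw [mul_pow, mul_pow, Real.sq_sqrt (by positivity)]

end RegularizedModel

theorem Matrix.PosSemidef.model_decrease {ι : Type*} [Fintype ι] [DecidableEq ι]
    {A : Matrix ι ι ℝ} (hA : A.PosSemidef) {γ θ : ℝ} (hγ : 0 < γ) {g s t : EuclideanSpace ℝ ι}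
    (hs : toEuclideanLin (A + γ • 1) s = -g + t) (ht : ‖t‖ ≤ θ * √(γ / (‖A‖ + γ)) * ‖g‖) :
    (1 - θ ^ 2) * ‖g‖ ^ 2 / (2 * (‖A‖ + γ)) ≤
      -⟪g, s⟫ - 1 / 2 * ⟪s, toEuclideanLin (A + γ • 1) s⟫ := by
  have hA' : (toEuclideanCLM (𝕜 := ℝ) A).IsPositive := by
    rwa [← ContinuousLinearMap.isPositive_toLinearMap_iff, coe_toEuclideanCLM_eq_toEuclideanLin,
      isPositive_toEuclideanLin_iff]
  have hB : ∀ x, toEuclideanLin (A + γ • 1) x = (toEuclideanCLM (𝕜 := ℝ) A + γ • 1) x := fun x => by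
    rw [← map_one (toEuclideanCLM (𝕜 := ℝ) (n := ι)), ← map_smul, ← map_add]; rfl
  rw [hB] at hs ⊢
  exact hA'.model_decrease hγ hs ht

section Counting

variable {p : ℕ → Prop} [DecidablePred p]

theorem Nat.card_setOf_lt_and_eq_count (N : ℕ) : Nat.card {k | k < N ∧ p k} = Nat.count p N := by
  rw [Nat.count_eq_card_filter_range, ← Nat.card_eq_finsetCard]
  exact Nat.card_congr (Equiv.subtypeEquivRight fun k => by simp)

theorem le_pow_count_mul {a : ℕ → ℝ} {r : ℝ} (hr : 0 ≤ r) {N : ℕ}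
    (hp : ∀ k < N, p k → a (k + 1) ≤ r * a k) (hnp : ∀ k < N, ¬p k → a (k + 1) ≤ a k) :
    a N ≤ r ^ Nat.count p N * a 0 := by
  induction N with
  | zero => simp
  | succ N ih =>
    have ih := ih (fun k hk => hp k (hk.trans N.lt_succ_self))
      (fun k hk => hnp k (hk.trans N.lt_succ_self))
    by_cases hN : p N
    · rw [Nat.count_succ, if_pos hN, pow_succ', mul_assoc]
      exact (hp N N.lt_succ_self hN).trans (by gcongr)
    · rw [Nat.count_succ, if_neg hN, add_zero]
      exact (hnp N N.lt_succ_self hN).trans ih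

theorem count_le_log_div_of_contraction {a : ℕ → ℝ} {c ε : ℝ} {N : ℕ} (hc : 0 < c)
    (hε : 0 < ε) (ha : ∀ k, 0 ≤ a k) (hp : ∀ k < N, p k → a (k + 1) ≤ (1 - c) * a k)
    (hnp : ∀ k < N, ¬p k → a (k + 1) ≤ a k) (hN : ε < a N) :
    (Nat.count p N : ℝ) ≤ Real.log (a 0 / ε) / c := by
  have hexp : a N ≤ Real.exp (-c) ^ Nat.count p N * a 0 :=
    le_pow_count_mul (Real.exp_pos _).le
      (fun k hk hpk => (hp k hk hpk).trans <| by gcongr; exacts [ha k, Real.one_sub_le_exp_neg c])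
      hnp
  rw [← Real.exp_nat_mul, mul_neg] at hexp
  have ha0 : 0 < a 0 := pos_of_mul_pos_right (hε.trans_le (hN.le.trans hexp)) (Real.exp_pos _).le
  rw [le_div_iff₀ hc]
  refine ((Real.lt_log_iff_exp_lt (div_pos ha0 hε)).2 ?_).le
  rw [lt_div_iff₀ hε]
  calc Real.exp (Nat.count p N * c) * ε
      < Real.exp (Nat.count p N * c) * (Real.exp (-(Nat.count p N * c)) * a 0) := by
        gcongr; exact hN.trans_le hexp
    _ = a 0 := by rw [← mul_assoc, ← Real.exp_add, add_neg_cancel, Real.exp_zero, one_mul]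

theorem mul_two_pow_count_not_le {γ : ℕ → ℝ} (hp : ∀ k, p k → γ k / 2 ≤ γ (k + 1))
    (hnp : ∀ k, ¬p k → γ (k + 1) = 2 * γ k) (N : ℕ) :
    γ 0 * 2 ^ Nat.count (¬p ·) N ≤ γ N * 2 ^ Nat.count p N := by
  induction N with
  | zero => simp
  | succ N ih =>
    by_cases hN : p N
    · rw [Nat.count_succ, Nat.count_succ, if_neg (not_not.2 hN), if_pos hN, add_zero, pow_succ]
      calc γ 0 * 2 ^ Nat.count (¬p ·) N ≤ γ N / 2 * (2 ^ Nat.count p N * 2) := by linarith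
        _ ≤ γ (N + 1) * (2 ^ Nat.count p N * 2) := by gcongr; exact hp N hN
    · rw [Nat.count_succ, Nat.count_succ, if_pos hN, if_neg hN, add_zero, pow_succ, hnp N hN]
      linarith

theorem count_not_le_count_add_logb {γ : ℕ → ℝ} {lo hi : ℝ} {N : ℕ} (hlo : 0 < lo)
    (h0 : lo ≤ γ 0) (hN : γ N ≤ hi) (hp : ∀ k, p k → γ k / 2 ≤ γ (k + 1))
    (hnp : ∀ k, ¬p k → γ (k + 1) = 2 * γ k) :
    (Nat.count (¬p ·) N : ℝ) ≤ Nat.count p N + Real.logb 2 (hi / lo) := by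
  have hpow : (2 : ℝ) ^ Nat.count (¬p ·) N ≤ hi / lo * 2 ^ Nat.count p N := by
    rw [div_mul_eq_mul_div, le_div_iff₀ hlo, mul_comm]
    calc lo * 2 ^ Nat.count (¬p ·) N ≤ γ 0 * 2 ^ Nat.count (¬p ·) N := by gcongr
      _ ≤ γ N * 2 ^ Nat.count p N := mul_two_pow_count_not_le hp hnp N
      _ ≤ hi * 2 ^ Nat.count p N := by gcongr
  have hratio : 0 < hi / lo :=
    pos_of_mul_pos_left ((pow_pos two_pos _).trans_le hpow) (by positivity)
  have := Real.logb_le_logb_of_le one_lt_two (pow_pos two_pos _) hpow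
  rwa [Real.logb_pow, Real.logb_mul hratio.ne' (by positivity), Real.logb_pow,
    Real.logb_self_eq_one one_lt_two, mul_one, mul_one, add_comm] at this

end Counting

theorem le_of_eq_max_half_or_eq_two_mul {p : ℕ → Prop} {γ : ℕ → ℝ} {γmin : ℝ} (hmin : 0 ≤ γmin)
    (h0 : γmin ≤ γ 0) (hp : ∀ k, p k → γ (k + 1) = max (γ k / 2) γmin)
    (hnp : ∀ k, ¬p k → γ (k + 1) = 2 * γ k) (k : ℕ) : γmin ≤ γ k := by
  induction k with
  | zero => exact h0
  | succ k ih =>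
    by_cases hk : p k
    · exact (hp k hk).symm ▸ le_max_right _ _
    · rw [hnp k hk]; linarith

theorem two_mul_le_of_sufficient_decrease {f f' r G Δ η θ ε Λ Λ' : ℝ} (hΛ' : 0 < Λ')
    (hΛ : Λ' ≤ Λ) (hη : 0 ≤ η) (hθ : 0 ≤ 1 - θ ^ 2) (hεr : 0 ≤ ε * r) (hf : f = 1 / 2 * r ^ 2)
    (hG : ε * r ≤ G) (hΔ : (1 - θ ^ 2) * G ^ 2 / (2 * Λ') ≤ Δ) (hacc : η * Δ ≤ f - f') :
    2 * f' ≤ (1 - η * (1 - θ ^ 2) * ε ^ 2 / Λ) * (2 * f) := by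
  have hG2 : (ε * r) ^ 2 ≤ G ^ 2 := pow_le_pow_left₀ hεr hG 2
  have hrate : η * (1 - θ ^ 2) * ε ^ 2 / Λ * (2 * f) ≤ 2 * (η * Δ) :=
    calc _ = η * (1 - θ ^ 2) * (ε * r) ^ 2 / Λ := by rw [hf]; ring
      _ ≤ η * (1 - θ ^ 2) * G ^ 2 / Λ' := by gcongr
      _ = 2 * (η * ((1 - θ ^ 2) * G ^ 2 / (2 * Λ'))) := by field_simp
      _ ≤ 2 * (η * Δ) := by gcongr
  linarith

theorem inexact_regularization_complexity_general
    (n m : ℕ)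
    (Rh : EuclideanSpace ℝ (Fin n) → EuclideanSpace ℝ (Fin m))
    (f : EuclideanSpace ℝ (Fin n) → ℝ) (hf : ∀ x, f x = (1/2) * ‖Rh x‖^2)
    (η : ℝ) (hη : η ∈ Set.Ioo (0:ℝ) 1)
    (θ : ℝ) (hθ : θ ∈ Set.Ico (0:ℝ) 1)
    (γmin : ℝ) (hγmin : 0 < γmin)
    (M_H : ℝ)
    -- the sequences generated by the algorithm
    (u : ℕ → EuclideanSpace ℝ (Fin n)) (γ : ℕ → ℝ) (hγ0 : γmin ≤ γ 0)
    (Hm : ℕ → Matrix (Fin n) (Fin n) ℝ)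
    (hHpsd : ∀ k, (Hm k).PosSemidef) (hHbd : ∀ k, ‖Hm k‖ ≤ M_H)
    (g s t : ℕ → EuclideanSpace ℝ (Fin n))
    (hstep : ∀ k, Matrix.toEuclideanLin
      (Hm k + γ k • (1 : Matrix (Fin n) (Fin n) ℝ)) (s k) = -(g k) + t k)
    (ht : ∀ k, ‖t k‖ ≤ θ * Real.sqrt (γ k / (‖Hm k‖ + γ k)) * ‖g k‖)
    (mdl : ℕ → EuclideanSpace ℝ (Fin n) → ℝ)
    (hmdl : ∀ k v, mdl k v = f (u k) + ⟪g k, v⟫ +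
      (1/2) * ⟪v, Matrix.toEuclideanLin (Hm k + γ k • (1 : Matrix (Fin n) (Fin n) ℝ)) v⟫)
    (Succ : ℕ → Prop)
    (hSucc : ∀ k, Succ k ↔ f (u k) - f (u k + s k) ≥ η * (mdl k 0 - mdl k (s k)))
    (hupS : ∀ k, Succ k → u (k + 1) = u k + s k ∧ γ (k + 1) = max (γ k / 2) γmin)
    (hupU : ∀ k, ¬Succ k → u (k + 1) = u k ∧ γ (k + 1) = 2 * γ k)
    -- uniform bound on the regularization parameter
    (Γ : ℝ) (hγbd : ∀ k, γ k ≤ Γ)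
    -- tolerances, and non-stationarity up to iteration N
    (ε_R : ℝ) (hεR : 0 < ε_R)
    (ε_g : ℝ) (hεg : ε_g ∈ Set.Ioo (0:ℝ) 1)
    (N : ℕ)
    (hstat : ∀ k ≤ N, ε_R < ‖Rh (u k)‖ ∧ ε_g * ‖Rh (u k)‖ < ‖g k‖ ∧ g k ≠ 0) :
    (Nat.card {k : ℕ | k < N ∧ Succ k} : ℝ) ≤
        1 + ((M_H + Γ) / (η * (1 - θ^2) * ε_g^2)) * Real.log (2 * f (u 0) / ε_R^2) ∧
      (Nat.card {k : ℕ | k < N ∧ ¬Succ k} : ℝ) ≤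
        (⌈(1:ℝ) + Real.logb 2 (Γ / γmin)⌉ : ℝ) *
          (1 + (Nat.card {k : ℕ | k < N ∧ Succ k} : ℝ)) := by
  classical
  obtain ⟨hη0, -⟩ := hη
  obtain ⟨hεg0, -⟩ := hεg
  have hγpos k : 0 < γ k := hγmin.trans_le <| le_of_eq_max_half_or_eq_two_mul hγmin.le hγ0
    (fun k hk => (hupS k hk).2) (fun k hk => (hupU k hk).2) k
  have hΛ : 0 < M_H + Γ := by linarith [norm_nonneg (Hm 0), hHbd 0, hγpos 0, hγbd 0]
  have hθ2 : 0 < 1 - θ ^ 2 := by nlinarith [hθ.1, hθ.2]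
  have hcontract : ∀ k < N, Succ k →
      2 * f (u (k + 1)) ≤ (1 - η * (1 - θ ^ 2) * ε_g ^ 2 / (M_H + Γ)) * (2 * f (u k)) := by
    intro k hk hS
    have hacc := (hSucc k).1 hS
    rw [hmdl, hmdl, ← (hupS k hS).1] at hacc
    simp only [inner_zero_right, map_zero, mul_zero, add_zero] at hacc
    exact two_mul_le_of_sufficient_decrease (by linarith [norm_nonneg (Hm k), hγpos k])
      (by linarith [hHbd k, hγbd k]) hη0.le hθ2.le (by positivity) (hf _) (hstat k hk.le).2.1.le
      ((hHpsd k).model_decrease (hγpos k) (hstep k) (ht k)) (by linarith)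
  have hSc := count_le_log_div_of_contraction (a := fun k => 2 * f (u k)) (ε := ε_R ^ 2) (p := Succ)
    (by positivity : 0 < η * (1 - θ ^ 2) * ε_g ^ 2 / (M_H + Γ)) (by positivity)
    (fun k => by rw [hf]; positivity) hcontract
    (fun k _ hk => by rw [(hupU k hk).1]) (by rw [hf]; nlinarith [(hstat N le_rfl).1])
  have hUc := count_not_le_count_add_logb hγmin hγ0 (hγbd N)
    (fun k hk => (hupS k hk).2 ▸ le_max_left _ _) (fun k hk => (hupU k hk).2)
  have hlogb : 0 ≤ Real.logb 2 (Γ / γmin) :=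
    Real.logb_nonneg one_lt_two ((one_le_div hγmin).2 (hγ0.trans (hγbd 0)))
  rw [Nat.card_setOf_lt_and_eq_count, Nat.card_setOf_lt_and_eq_count (p := (¬Succ ·))]
  refine ⟨?_, ?_⟩
  · rw [div_eq_inv_mul, inv_div] at hSc
    linarith
  · nlinarith [Int.le_ceil (1 + Real.logb 2 (Γ / γmin)), (Nat.count Succ N).cast_nonneg (α := ℝ)]

/-- Iteration complexity of the inexact regularization method for
least squares: with `γ_k ≤ Γ` for all `k`, the number of successful iterations
among `0,…,N-1` before reaching an `(ε_R, ε_g)`-stationary point is at most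
`1 + ((M_H+Γ)/(η(1-θ²)ε_g²))·ln(2 f(u_0)/ε_R²)`, and the number of unsuccessful
iterations among `0,…,N-1` is at most `⌈1 + log₂(Γ/γ_min)⌉` times one plus the
number of successful iterations among `0,…,N-1`. -/
theorem inexact_regularization_complexity
    (n m : ℕ)
    (Rh : EuclideanSpace ℝ (Fin n) → EuclideanSpace ℝ (Fin m))
    (hRh : ContDiff ℝ 1 Rh)
    (Gh : EuclideanSpace ℝ (Fin n) → Matrix (Fin m) (Fin n) ℝ)
    (hJac : ∀ x, fderiv ℝ Rh x = (Matrix.toEuclideanLin (Gh x)).toContinuousLinearMap)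
    (f : EuclideanSpace ℝ (Fin n) → ℝ) (hf : ∀ x, f x = (1/2) * ‖Rh x‖^2)
    (L : ℝ) (hL : 0 < L)
    (hLip : ∀ x y : EuclideanSpace ℝ (Fin n), ‖∇ f x - ∇ f y‖ ≤ L * ‖x - y‖)
    (η : ℝ) (hη : η ∈ Set.Ioo (0:ℝ) 1)
    (θ : ℝ) (hθ : θ ∈ Set.Ico (0:ℝ) 1)
    (γmin : ℝ) (hγmin : 0 < γmin)
    (M_H : ℝ) (hMH : 0 < M_H)
    -- the sequences generated by the algorithm
    (u : ℕ → EuclideanSpace ℝ (Fin n)) (γ : ℕ → ℝ) (hγ0 : γmin ≤ γ 0)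
    (Hm : ℕ → Matrix (Fin n) (Fin n) ℝ)
    (hHpsd : ∀ k, (Hm k).PosSemidef) (hHbd : ∀ k, ‖Hm k‖ ≤ M_H)
    (g s t : ℕ → EuclideanSpace ℝ (Fin n))
    (hg : ∀ k, g k = Matrix.toEuclideanLin (Gh (u k))ᵀ (Rh (u k)))
    (hstep : ∀ k, Matrix.toEuclideanLin
      (Hm k + γ k • (1 : Matrix (Fin n) (Fin n) ℝ)) (s k) = -(g k) + t k)
    (ht : ∀ k, ‖t k‖ ≤ θ * Real.sqrt (γ k / (‖Hm k‖ + γ k)) * ‖g k‖)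
    (mdl : ℕ → EuclideanSpace ℝ (Fin n) → ℝ)
    (hmdl : ∀ k v, mdl k v = f (u k) + ⟪g k, v⟫ +
      (1/2) * ⟪v, Matrix.toEuclideanLin (Hm k + γ k • (1 : Matrix (Fin n) (Fin n) ℝ)) v⟫)
    (Succ : ℕ → Prop)
    (hSucc : ∀ k, Succ k ↔ f (u k) - f (u k + s k) ≥ η * (mdl k 0 - mdl k (s k)))
    (hupS : ∀ k, Succ k → u (k + 1) = u k + s k ∧ γ (k + 1) = max (γ k / 2) γmin)
    (hupU : ∀ k, ¬Succ k → u (k + 1) = u k ∧ γ (k + 1) = 2 * γ k)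
    -- uniform bound on the regularization parameter
    (Γ : ℝ) (hΓ : 1 ≤ Γ) (hγbd : ∀ k, γ k ≤ Γ)
    -- tolerances, and non-stationarity up to iteration N
    (ε_R : ℝ) (hεR : 0 < ε_R) (hεRJ0 : ε_R^2 ≤ 2 * f (u 0))
    (ε_g : ℝ) (hεg : ε_g ∈ Set.Ioo (0:ℝ) 1)
    (N : ℕ)
    (hstat : ∀ k ≤ N, ε_R < ‖Rh (u k)‖ ∧ ε_g * ‖Rh (u k)‖ < ‖g k‖ ∧ g k ≠ 0) :
    (Nat.card {k : ℕ | k < N ∧ Succ k} : ℝ) ≤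
        1 + ((M_H + Γ) / (η * (1 - θ^2) * ε_g^2)) * Real.log (2 * f (u 0) / ε_R^2) ∧
      (Nat.card {k : ℕ | k < N ∧ ¬Succ k} : ℝ) ≤
        (⌈(1:ℝ) + Real.logb 2 (Γ / γmin)⌉ : ℝ) *
          (1 + (Nat.card {k : ℕ | k < N ∧ Succ k} : ℝ)) :=
  inexact_regularization_complexity_general n m Rh f hf η hη θ hθ γmin hγmin M_H u γ hγ0 Hm hHpsd
    hHbd g s t hstep ht mdl hmdl Succ hSucc hupS hupU Γ hγbd ε_R hεR ε_g hεg N hstat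
end
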